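/- arXiv:2108.05566 — 10 statements merged into one kernel-verified Lean document; each statement's English description precedes it below -/
import Mathlib

section
/- Let P(λ) = λ(J₁+R₁) + (J₂+R₂) be an n×n complex posH pencil. If λ₀ is a positive real number and x ∈ ℂⁿ satisfies P(λ₀)x = (λ₀(J₁+R₁) + (J₂+R₂))x = 0, then R₁x = 0, R₂x = 0, and (λ₀J₁ + J₂)x = 0. -/
open Matrix
open scoped ComplexOrder

/-!
Write `P(λ₀) = K + S` with `K = λ₀J₁ + J₂` skew-Hermitian and `S = λ₀R₁ + R₂` positive
semidefinite (this is where `λ₀ > 0` enters). Taking the real part of `x⋆ P(λ₀) x = 0` gives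
`x⋆ S x = 0`, hence `S x = 0`; since `x⋆ S x = λ₀ x⋆R₁x + x⋆R₂x` is a sum of nonnegative terms,
also `R₁ x = R₂ x = 0`, and finally `K x = P(λ₀) x - S x = 0`.
-/

namespace Matrix

variable {ι 𝕜 : Type*} [Fintype ι] [RCLike 𝕜] {A B J : Matrix ι ι 𝕜}

lemma re_dotProduct_mulVec_eq_zero_of_conjTranspose_eq_neg (hJ : Jᴴ = -J) (x : ι → 𝕜) :
    RCLike.re (star x ⬝ᵥ J *ᵥ x) = 0 := by
  have hconj : star (star x ⬝ᵥ J *ᵥ x) = -(star x ⬝ᵥ J *ᵥ x) :=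
    calc star (star x ⬝ᵥ J *ᵥ x) = star x ⬝ᵥ Jᴴ *ᵥ x := by
          rw [star_dotProduct, star_star, star_mulVec, ← dotProduct_mulVec]
      _ = -(star x ⬝ᵥ J *ᵥ x) := by rw [hJ, neg_mulVec, dotProduct_neg]
  have hre := congrArg RCLike.re hconj
  rw [RCLike.star_def, RCLike.conj_re, map_neg] at hre
  linarith

namespace PosSemidef

lemma add_mulVec_eq_zero_iff (hA : A.PosSemidef) (hB : B.PosSemidef) (x : ι → 𝕜) :
    (A + B) *ᵥ x = 0 ↔ A *ᵥ x = 0 ∧ B *ᵥ x = 0 := by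
  rw [← (hA.add hB).dotProduct_mulVec_zero_iff, ← hA.dotProduct_mulVec_zero_iff,
    ← hB.dotProduct_mulVec_zero_iff, add_mulVec, dotProduct_add]
  exact add_eq_zero_iff_of_nonneg (hA.dotProduct_mulVec_nonneg x) (hB.dotProduct_mulVec_nonneg x)

lemma mulVec_eq_zero_of_add_mulVec_eq_zero (hA : A.PosSemidef) (hJ : Jᴴ = -J) {x : ι → 𝕜}
    (h : (J + A) *ᵥ x = 0) : A *ᵥ x = 0 := by
  have hsum : star x ⬝ᵥ J *ᵥ x + star x ⬝ᵥ A *ᵥ x = 0 := by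
    rw [← dotProduct_add, ← add_mulVec, h, dotProduct_zero]
  have him : RCLike.im (star x ⬝ᵥ A *ᵥ x) = 0 :=
    (RCLike.nonneg_iff.1 (hA.dotProduct_mulVec_nonneg x)).2
  rw [← hA.dotProduct_mulVec_zero_iff]
  refine RCLike.ext ?_ (by rw [him, map_zero])
  simpa [re_dotProduct_mulVec_eq_zero_of_conjTranspose_eq_neg hJ] using congrArg RCLike.re hsum

end PosSemidef

end Matrix

/-- Lemma 3.4(i): for a posH pencil `P(λ) = λ(J₁+R₁) + (J₂+R₂)`, if `λ₀` is a
positive real number and `P(λ₀)x = 0`, then `R₁x = 0`, `R₂x = 0` and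
`(λ₀J₁ + J₂)x = 0`. -/
theorem posH_real_positive_eigenvector {n : ℕ}
    (J₁ J₂ R₁ R₂ : Matrix (Fin n) (Fin n) ℂ)
    (hJ₁ : J₁ᴴ = -J₁) (hJ₂ : J₂ᴴ = -J₂)
    (hR₁ : R₁.PosSemidef) (hR₂ : R₂.PosSemidef)
    (lam : ℝ) (hlam : 0 < lam) (x : Fin n → ℂ)
    (hx : ((lam : ℂ) • (J₁ + R₁) + (J₂ + R₂)) *ᵥ x = 0) :
    R₁ *ᵥ x = 0 ∧ R₂ *ᵥ x = 0 ∧ ((lam : ℂ) • J₁ + J₂) *ᵥ x = 0 := by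
  set K := (lam : ℂ) • J₁ + J₂
  have hK : Kᴴ = -K := by
    simp only [K, conjTranspose_add, conjTranspose_smul, Complex.star_def, Complex.conj_ofReal,
      hJ₁, hJ₂, smul_neg, neg_add]
  have hlamR₁ : ((lam : ℂ) • R₁).PosSemidef := hR₁.smul (by exact_mod_cast hlam.le)
  have hPx : (K + ((lam : ℂ) • R₁ + R₂)) *ᵥ x = 0 := by
    rw [← hx]
    congr 1
    module
  have hSx := (hlamR₁.add hR₂).mulVec_eq_zero_of_add_mulVec_eq_zero hK hPx
  obtain ⟨hR₁x, hR₂x⟩ := (hlamR₁.add_mulVec_eq_zero_iff hR₂ x).1 hSx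
  refine ⟨?_, hR₂x, ?_⟩
  · rw [smul_mulVec, smul_eq_zero] at hR₁x
    exact hR₁x.resolve_left (by exact_mod_cast hlam.ne')
  · rwa [add_mulVec, hSx, add_zero] at hPx
end

section
/- Let P(λ) = λ(J₁+R₁) + (J₂+R₂) be an n×n complex posH pencil, let k ≥ 0, and suppose the vectors x₁, …, x_{k+1} ∈ ℂⁿ form a singular chain of P(λ) associated with a right minimal index k, i.e., (J₁+R₁)x₁ = 0, (J₁+R₁)x_{i+1} = (J₂+R₂)x_i for i = 1, …, k, and (J₂+R₂)x_{k+1} = 0. Then R₁x_j = 0 and R₂x_j = 0 for all j = 1, …, k+1, and consequently J₁x₁ = 0, J₁x_{i+1} = J₂x_i for i = 1, …, k, and J₂x_{k+1} = 0, i.e., (x₁, …, x_{k+1}) is also a singular chain of the skew-Hermitian pencil λJ₁ + J₂. -/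
/-!
A singular chain of `λA + B` yields the polynomial vector
`v(s) = ∑ sⁱ x_{k+1-i}` with `(B - sA) v(s) = 0` for all `s`. At `s = -t` with `t > 0` this reads
`(t(J₁+R₁) + (J₂+R₂)) v = 0`; taking the real part of `v*(⋯)v` kills the skew-Hermitian terms
and leaves `t v*R₁v + v*R₂v = 0`, a sum of nonnegative terms, so `R₁v = R₂v = 0`. Since this
holds for infinitely many `s`, every coefficient `Rᵢ xⱼ` of the polynomial vectors `Rᵢ v(s)`
vanishes, and subtracting the `R`-parts from the chain relations gives the chain for `λJ₁ + J₂`.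
-/

open Matrix Polynomial
open scoped ComplexOrder

theorem eq_zero_of_sum_pow_smul_eq_zero {K m : Type*} [CommRing K] [IsDomain K] {S : Set K}
    (hS : S.Infinite) {N : ℕ} {y : ℕ → m → K}
    (h : ∀ s ∈ S, ∑ i ∈ Finset.range N, s ^ i • y i = 0) {i : ℕ} (hi : i < N) : y i = 0 := by
  funext j
  let p : K[X] := ∑ l ∈ Finset.range N, X ^ l * C (y l j)
  have hp : p = 0 := p.eq_zero_of_infinite_isRoot <| hS.mono fun s hs => by
    simpa only [p, Set.mem_ofPred_eq, IsRoot, eval_finsetSum, eval_mul, eval_pow, eval_X, eval_C,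
      Finset.sum_apply, Pi.smul_apply, smul_eq_mul, Pi.zero_apply] using congrFun (h s hs) j
  simpa [p, finsetSum_coeff, coeff_X_pow_mul', hi] using congrArg (coeff · i) hp

namespace Matrix

variable {m : Type*} [Fintype m]

theorem re_star_dotProduct_mulVec_of_conjTranspose_eq_neg {J : Matrix m m ℂ} (hJ : Jᴴ = -J)
    (y : m → ℂ) : (star y ⬝ᵥ J *ᵥ y).re = 0 := by
  have h : star (star y ⬝ᵥ J *ᵥ y) = star y ⬝ᵥ Jᴴ *ᵥ y := by
    rw [star_dotProduct, star_star, star_mulVec, dotProduct_mulVec]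
  rw [hJ, neg_mulVec, dotProduct_neg] at h
  have := congrArg Complex.re h
  simp only [Complex.star_def, Complex.conj_re, Complex.neg_re] at this
  linarith

theorem PosSemidef.mulVec_eq_zero_of_re_eq_zero {R : Matrix m m ℂ} (hR : R.PosSemidef)
    {y : m → ℂ} (hy : (star y ⬝ᵥ R *ᵥ y).re = 0) : R *ᵥ y = 0 := by
  refine (hR.dotProduct_mulVec_zero_iff y).mp (Complex.ext hy ?_)
  exact (Complex.nonneg_iff.mp (hR.dotProduct_mulVec_nonneg y)).2.symm

theorem mulVec_eq_zero_of_posH_pencil_mulVec_eq_zero {J₁ J₂ R₁ R₂ : Matrix m m ℂ}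
    (hJ₁ : J₁ᴴ = -J₁) (hJ₂ : J₂ᴴ = -J₂) (hR₁ : R₁.PosSemidef) (hR₂ : R₂.PosSemidef)
    {t : ℝ} (ht : 0 < t) {w : m → ℂ} (hw : ((t : ℂ) • (J₁ + R₁) + (J₂ + R₂)) *ᵥ w = 0) :
    R₁ *ᵥ w = 0 ∧ R₂ *ᵥ w = 0 := by
  have hre : t * (star w ⬝ᵥ R₁ *ᵥ w).re + (star w ⬝ᵥ R₂ *ᵥ w).re = 0 := by
    have := congrArg (fun u => (star w ⬝ᵥ u).re) hw
    simpa only [add_mulVec, smul_mulVec, dotProduct_add, dotProduct_smul, smul_eq_mul,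
      Complex.add_re, Complex.re_ofReal_mul, re_star_dotProduct_mulVec_of_conjTranspose_eq_neg hJ₁,
      re_star_dotProduct_mulVec_of_conjTranspose_eq_neg hJ₂, zero_add, dotProduct_zero, Complex.zero_re] using this
  have h₁ := (Complex.nonneg_iff.mp (hR₁.dotProduct_mulVec_nonneg w)).1
  have h₂ := (Complex.nonneg_iff.mp (hR₂.dotProduct_mulVec_nonneg w)).1
  exact ⟨hR₁.mulVec_eq_zero_of_re_eq_zero (by nlinarith),
    hR₂.mulVec_eq_zero_of_re_eq_zero (by nlinarith)⟩

end Matrix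

section SingularChain

variable {R m : Type*} [CommRing R] [Fintype m]

def singularChainVec (x : ℕ → m → R) (k : ℕ) (s : R) : m → R :=
  ∑ i ∈ Finset.range (k + 1), s ^ i • x (k + 1 - i)

theorem sub_smul_mulVec_singularChainVec {A B : Matrix m m R} {k : ℕ} {x : ℕ → m → R}
    (hfirst : A *ᵥ x 1 = 0) (hchain : ∀ i, 1 ≤ i → i ≤ k → A *ᵥ x (i + 1) = B *ᵥ x i)
    (hlast : B *ᵥ x (k + 1) = 0) (s : R) : (B - s • A) *ᵥ singularChainVec x k s = 0 := by
  rw [sub_mulVec, sub_eq_zero, smul_mulVec, singularChainVec, mulVec_sum, mulVec_sum,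
    Finset.smul_sum, Finset.sum_range_succ', Finset.sum_range_succ]
  simp only [mulVec_smul, smul_smul, Nat.sub_zero, hlast, Nat.add_sub_cancel_left, hfirst, smul_zero,
    add_zero]
  refine Finset.sum_congr rfl fun i hi => ?_
  have hi : i < k := Finset.mem_range.mp hi
  rw [show k + 1 - i = k - i + 1 by omega, hchain (k - i) (by omega) (by omega), pow_succ',
    show k + 1 - (i + 1) = k - i by omega]

theorem mulVec_eq_zero_of_mulVec_singularChainVec_eq_zero [IsDomain R] {M : Matrix m m R}
    {k : ℕ} {x : ℕ → m → R} {S : Set R} (hS : S.Infinite)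
    (h : ∀ s ∈ S, M *ᵥ singularChainVec x k s = 0) {j : ℕ} (hj₁ : 1 ≤ j) (hj₂ : j ≤ k + 1) :
    M *ᵥ x j = 0 := by
  have hcoeff := eq_zero_of_sum_pow_smul_eq_zero hS (y := fun i => M *ᵥ x (k + 1 - i))
    (fun s hs => by simpa only [singularChainVec, mulVec_sum, mulVec_smul] using h s hs)
    (i := k + 1 - j) (by omega)
  rwa [show k + 1 - (k + 1 - j) = j by omega] at hcoeff

end SingularChain

/-- Theorem 3.5: if `(x 1, …, x (k+1))` is a singular chain of the posH pencil
`P(λ) = λ(J₁+R₁) + (J₂+R₂)` associated with a right minimal index `k`, then all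
chain vectors lie in `ker R₁ ∩ ker R₂` and the chain is also a singular chain of
the skew-Hermitian pencil `λJ₁ + J₂`. -/
theorem posH_singular_chain {n : ℕ}
    (J₁ J₂ R₁ R₂ : Matrix (Fin n) (Fin n) ℂ)
    (hJ₁ : J₁ᴴ = -J₁) (hJ₂ : J₂ᴴ = -J₂)
    (hR₁ : R₁.PosSemidef) (hR₂ : R₂.PosSemidef)
    (k : ℕ) (x : ℕ → (Fin n → ℂ))
    (hfirst : (J₁ + R₁) *ᵥ x 1 = 0)
    (hchain : ∀ i, 1 ≤ i → i ≤ k → (J₁ + R₁) *ᵥ x (i + 1) = (J₂ + R₂) *ᵥ x i)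
    (hlast : (J₂ + R₂) *ᵥ x (k + 1) = 0) :
    (∀ j, 1 ≤ j → j ≤ k + 1 → R₁ *ᵥ x j = 0 ∧ R₂ *ᵥ x j = 0) ∧
    J₁ *ᵥ x 1 = 0 ∧
    (∀ i, 1 ≤ i → i ≤ k → J₁ *ᵥ x (i + 1) = J₂ *ᵥ x i) ∧
    J₂ *ᵥ x (k + 1) = 0 := by
  set S : Set ℂ := (fun t : ℝ => -(t : ℂ)) '' Set.Ioi 0
  have hS : S.Infinite := (Set.Ioi_infinite 0).image
    (neg_injective.comp Complex.ofReal_injective).injOn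
  have hker : ∀ s ∈ S, R₁ *ᵥ singularChainVec x k s = 0 ∧ R₂ *ᵥ singularChainVec x k s = 0 := by
    rintro _ ⟨t, ht, rfl⟩
    refine mulVec_eq_zero_of_posH_pencil_mulVec_eq_zero hJ₁ hJ₂ hR₁ hR₂ ht ?_
    simpa only [neg_smul, sub_neg_eq_add, add_comm]
      using sub_smul_mulVec_singularChainVec hfirst hchain hlast (-(t : ℂ))
  have hR : ∀ j, 1 ≤ j → j ≤ k + 1 → R₁ *ᵥ x j = 0 ∧ R₂ *ᵥ x j = 0 := fun j hj₁ hj₂ =>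
    ⟨mulVec_eq_zero_of_mulVec_singularChainVec_eq_zero hS (fun s hs => (hker s hs).1) hj₁ hj₂,
      mulVec_eq_zero_of_mulVec_singularChainVec_eq_zero hS (fun s hs => (hker s hs).2) hj₁ hj₂⟩
  refine ⟨hR, ?_, fun i hi₁ hi₂ => ?_, ?_⟩
  · simpa only [add_mulVec, (hR 1 le_rfl (by omega)).1, add_zero] using hfirst
  · simpa only [add_mulVec, (hR (i + 1) (by omega) (by omega)).1, (hR i hi₁ (by omega)).2,
      add_zero] using hchain i hi₁ hi₂
  · simpa only [add_mulVec, (hR (k + 1) (by omega) le_rfl).2, add_zero] using hlast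
end

section
/- Let P(λ) = λ(J₁+R₁) + (J₂+R₂) be an n×n complex posH pencil. If P(λ) is singular, i.e., det(λ₀(J₁+R₁) + (J₂+R₂)) = 0 for every λ₀ ∈ ℂ, then there exists a nonzero x ∈ ℂⁿ with J₁x = 0, R₁x = 0 and R₂x = 0, and there exists a nonzero y ∈ ℂⁿ with J₂y = 0, R₁y = 0 and R₂y = 0. In particular, each of the triples (J₁, R₁, R₂) and (J₂, R₁, R₂) has a common kernel. -/
/-!
For `t > 0` the pencil `t (J₁ + R₁) + (J₂ + R₂)` is again skew-Hermitian plus positive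
semidefinite, and the kernel of such a sum `J + R` is `ker J ∩ ker R` (the quadratic form of `J`
is imaginary, that of `R` real and nonnegative). So singularity gives, for every `t > 0`, a
nonzero vector in `ker (t J₁ + J₂) ∩ ker R₁ ∩ ker R₂ = ker ((J₂ + R₁ + R₂) + t J₁)`, and likewise
in `ker ((J₁ + R₁ + R₂) + t J₂)` (replace `t` by `t⁻¹`). Injectivity of a linear map on a
finite-dimensional space is an open condition, so letting `t → 0` the matrices `J₁ + R₁ + R₂`
and `J₂ + R₁ + R₂` are singular, and their kernels are the two common kernels.
-/

open Matrix
open scoped ComplexOrder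
open Filter Topology

theorem ContinuousLinearMap.eventually_injective_add_smul {𝕜 E F : Type*}
    [NontriviallyNormedField 𝕜] [CompleteSpace 𝕜] [NormedAddCommGroup E] [NormedSpace 𝕜 E]
    [FiniteDimensional 𝕜 E] [NormedAddCommGroup F] [NormedSpace 𝕜 F]
    {A : E →L[𝕜] F} (hA : Function.Injective A) (B : E →L[𝕜] F) :
    ∀ᶠ c in 𝓝 (0 : 𝕜), Function.Injective ⇑(A + c • B) := by
  have hlim : Tendsto (fun c : 𝕜 => A + c • B) (𝓝 0) (𝓝 A) := by
    simpa using tendsto_const_nhds.add ((tendsto_id (x := 𝓝 (0 : 𝕜))).smul_const B)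
  exact hlim.eventually (isOpen_injective.mem_nhds hA)

theorem Matrix.exists_mulVec_eq_zero_of_frequently {𝕜 m n : Type*} [NontriviallyNormedField 𝕜]
    [CompleteSpace 𝕜] [Fintype m] [Fintype n] {A B : Matrix m n 𝕜}
    (h : ∃ᶠ c in 𝓝 (0 : 𝕜), ∃ x ≠ 0, (A + c • B) *ᵥ x = 0) : ∃ x ≠ 0, A *ᵥ x = 0 := by
  by_contra! hA
  let L (M : Matrix m n 𝕜) : (n → 𝕜) →L[𝕜] (m → 𝕜) :=
    LinearMap.toContinuousLinearMap M.mulVecLin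
  have hinj : Function.Injective (L A) :=
    (injective_iff_map_eq_zero _).2 fun x hx => by_contra fun hx0 => hA x hx0 hx
  obtain ⟨c, ⟨x, hx0, hx⟩, hc⟩ :=
    (h.and_eventually (ContinuousLinearMap.eventually_injective_add_smul hinj (L B))).exists
  exact hx0 (hc (by simpa [L, add_mulVec, smul_mulVec] using hx))

section SkewAddPosSemidef

variable {𝕜 n : Type*} [RCLike 𝕜] [Fintype n]

theorem Matrix.star_dotProduct_mulVec_self {R : Type*} [CommSemiring R] [StarRing R]
    (A : Matrix n n R) (x : n → R) :
    star (star x ⬝ᵥ A *ᵥ x) = star x ⬝ᵥ Aᴴ *ᵥ x := by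
  rw [← star_dotProduct, star_mulVec, dotProduct_mulVec]

theorem Matrix.mulVec_add_eq_zero_iff_of_skew_of_posSemidef {J R : Matrix n n 𝕜} (hJ : Jᴴ = -J)
    (hR : R.PosSemidef) {x : n → 𝕜} : (J + R) *ᵥ x = 0 ↔ J *ᵥ x = 0 ∧ R *ᵥ x = 0 := by
  refine ⟨fun h => ?_, fun ⟨hJx, hRx⟩ => by rw [add_mulVec, hJx, hRx, add_zero]⟩
  set p := star x ⬝ᵥ J *ᵥ x
  set q := star x ⬝ᵥ R *ᵥ x
  have hpq : p + q = 0 := by rw [← dotProduct_add, ← add_mulVec, h, dotProduct_zero]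
  have hp : star p = -p := by rw [star_dotProduct_mulVec_self, hJ, neg_mulVec, dotProduct_neg]
  have hq : star q = q := by rw [star_dotProduct_mulVec_self, hR.isHermitian.eq]
  have hq0 : q = 0 := by
    have := congrArg star hpq
    rw [star_add, hp, hq, star_zero] at this
    linear_combination (hpq + this) / 2
  have hRx : R *ᵥ x = 0 := (hR.dotProduct_mulVec_zero_iff x).1 hq0
  rw [add_mulVec, hRx, add_zero] at h
  exact ⟨h, hRx⟩

theorem Matrix.PosSemidef.add_mulVec_eq_zero_iff_s3 {R₁ R₂ : Matrix n n 𝕜} (hR₁ : R₁.PosSemidef)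
    (hR₂ : R₂.PosSemidef) {x : n → 𝕜} :
    (R₁ + R₂) *ᵥ x = 0 ↔ R₁ *ᵥ x = 0 ∧ R₂ *ᵥ x = 0 := by
  rw [← (hR₁.add hR₂).dotProduct_mulVec_zero_iff, ← hR₁.dotProduct_mulVec_zero_iff,
    ← hR₂.dotProduct_mulVec_zero_iff, add_mulVec, dotProduct_add]
  exact add_eq_zero_iff_of_nonneg (hR₁.dotProduct_mulVec_nonneg x) (hR₂.dotProduct_mulVec_nonneg x)

theorem Matrix.mulVec_add_add_eq_zero_iff_of_skew_of_posSemidef {J R₁ R₂ : Matrix n n 𝕜}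
    (hJ : Jᴴ = -J) (hR₁ : R₁.PosSemidef) (hR₂ : R₂.PosSemidef) {x : n → 𝕜} :
    (J + (R₁ + R₂)) *ᵥ x = 0 ↔ J *ᵥ x = 0 ∧ R₁ *ᵥ x = 0 ∧ R₂ *ᵥ x = 0 := by
  rw [mulVec_add_eq_zero_iff_of_skew_of_posSemidef hJ (hR₁.add hR₂), hR₁.add_mulVec_eq_zero_iff_s3 hR₂]

theorem Matrix.posH_pencil_mulVec_eq_zero_iff {J₁ J₂ R₁ R₂ : Matrix n n 𝕜} (hJ₁ : J₁ᴴ = -J₁)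
    (hJ₂ : J₂ᴴ = -J₂) (hR₁ : R₁.PosSemidef) (hR₂ : R₂.PosSemidef) {t : ℝ} (ht : 0 < t)
    {x : n → 𝕜} :
    ((t : 𝕜) • (J₁ + R₁) + (J₂ + R₂)) *ᵥ x = 0 ↔
      ((t : 𝕜) • J₁ + J₂) *ᵥ x = 0 ∧ R₁ *ᵥ x = 0 ∧ R₂ *ᵥ x = 0 := by
  have hJ : ((t : 𝕜) • J₁ + J₂)ᴴ = -((t : 𝕜) • J₁ + J₂) := by
    rw [conjTranspose_add, conjTranspose_smul, hJ₁, hJ₂, RCLike.star_def, RCLike.conj_ofReal,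
      smul_neg, neg_add]
  have hR : ((t : 𝕜) • R₁).PosSemidef := hR₁.smul (RCLike.ofReal_nonneg.2 ht.le)
  have hpencil :
      (t : 𝕜) • (J₁ + R₁) + (J₂ + R₂) = ((t : 𝕜) • J₁ + J₂) + ((t : 𝕜) • R₁ + R₂) := by
    rw [smul_add]; abel
  rw [hpencil, mulVec_add_add_eq_zero_iff_of_skew_of_posSemidef hJ hR hR₂, smul_mulVec,
    smul_eq_zero, or_iff_right (RCLike.ofReal_ne_zero.2 ht.ne')]

end SkewAddPosSemidef

theorem RCLike.frequently_nhds_zero_of_forall_pos {𝕜 : Type*} [RCLike 𝕜] {P : 𝕜 → Prop}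
    (h : ∀ t : ℝ, 0 < t → P t) : ∃ᶠ c in 𝓝 (0 : 𝕜), P c := by
  have hlim : Tendsto (fun t : ℝ => (t : 𝕜)) (𝓝[>] (0 : ℝ)) (𝓝 0) :=
    (RCLike.continuous_ofReal.tendsto' 0 0 RCLike.ofReal_zero).mono_left nhdsWithin_le_nhds
  have hpos : ∀ᶠ t : ℝ in 𝓝[>] 0, P t := eventually_mem_nhdsWithin.mono h
  exact hlim.frequently hpos.frequently

/-- Corollary 3.8(i): if a posH pencil `P(λ) = λ(J₁+R₁) + (J₂+R₂)` is singular,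
then each of the triples `(J₁, R₁, R₂)` and `(J₂, R₁, R₂)` has a common kernel. -/
theorem posH_singular_common_kernel {n : ℕ}
    (J₁ J₂ R₁ R₂ : Matrix (Fin n) (Fin n) ℂ)
    (hJ₁ : J₁ᴴ = -J₁) (hJ₂ : J₂ᴴ = -J₂)
    (hR₁ : R₁.PosSemidef) (hR₂ : R₂.PosSemidef)
    (hsing : ∀ μ : ℂ, (μ • (J₁ + R₁) + (J₂ + R₂)).det = 0) :
    (∃ x : Fin n → ℂ, x ≠ 0 ∧ J₁ *ᵥ x = 0 ∧ R₁ *ᵥ x = 0 ∧ R₂ *ᵥ x = 0) ∧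
    (∃ y : Fin n → ℂ, y ≠ 0 ∧ J₂ *ᵥ y = 0 ∧ R₁ *ᵥ y = 0 ∧ R₂ *ᵥ y = 0) := by
  have hker (t : ℝ) (ht : 0 < t) :
      ∃ x ≠ 0, ((t : ℂ) • J₁ + J₂) *ᵥ x = 0 ∧ R₁ *ᵥ x = 0 ∧ R₂ *ᵥ x = 0 :=
    (exists_mulVec_eq_zero_iff.2 (hsing t)).imp fun _ ⟨hx0, hx⟩ =>
      ⟨hx0, (posH_pencil_mulVec_eq_zero_iff hJ₁ hJ₂ hR₁ hR₂ ht).1 hx⟩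
  have hJ₁side : ∃ᶠ c in 𝓝 (0 : ℂ), ∃ x ≠ 0, (J₁ + (R₁ + R₂) + c • J₂) *ᵥ x = 0 := by
    refine RCLike.frequently_nhds_zero_of_forall_pos fun t ht => ?_
    obtain ⟨x, hx0, hJx, hR₁x, hR₂x⟩ := hker t⁻¹ (inv_pos.2 ht)
    have hJx' : J₁ *ᵥ x + (t : ℂ) • J₂ *ᵥ x = 0 := by
      simpa [add_mulVec, smul_mulVec, smul_add, smul_smul, ht.ne'] using
        congrArg ((t : ℂ) • ·) hJx
    exact ⟨x, hx0, by simpa [add_mulVec, smul_mulVec, hR₁x, hR₂x] using hJx'⟩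
  have hJ₂side : ∃ᶠ c in 𝓝 (0 : ℂ), ∃ x ≠ 0, (J₂ + (R₁ + R₂) + c • J₁) *ᵥ x = 0 := by
    refine RCLike.frequently_nhds_zero_of_forall_pos fun t ht => ?_
    obtain ⟨x, hx0, hJx, hR₁x, hR₂x⟩ := hker t ht
    exact ⟨x, hx0, by simpa [add_mulVec, smul_mulVec, hR₁x, hR₂x, add_comm] using hJx⟩
  obtain ⟨x, hx0, hx⟩ := exists_mulVec_eq_zero_of_frequently hJ₁side
  obtain ⟨y, hy0, hy⟩ := exists_mulVec_eq_zero_of_frequently hJ₂side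
  exact ⟨⟨x, hx0, (mulVec_add_add_eq_zero_iff_of_skew_of_posSemidef hJ₁ hR₁ hR₂).1 hx⟩,
    ⟨y, hy0, (mulVec_add_add_eq_zero_iff_of_skew_of_posSemidef hJ₂ hR₁ hR₂).1 hy⟩⟩
end

section
/- Let P(λ) = λ(J₁+R₁) + (J₂+R₂) be an n×n complex posH pencil. If the skew-Hermitian pencil λJ₁ + J₂ is regular, i.e., det(μJ₁ + J₂) ≠ 0 for some μ ∈ ℂ, then P(λ) is regular, and every real positive eigenvalue of P(λ) is also an eigenvalue of λJ₁ + J₂: for every real α > 0 with det(α(J₁+R₁) + (J₂+R₂)) = 0 one has det(αJ₁ + J₂) = 0. -/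
open Matrix Polynomial
open scoped ComplexOrder

/-!
For real `α ≥ 0` the matrix `P(α)` splits as `K + S` with `K = αJ₁ + J₂` skew-Hermitian and
`S = αR₁ + R₂` positive semidefinite. If `(K + S) x = 0`, then `x* K x` is purely imaginary and
`x* S x` is real and nonnegative while they sum to zero, so `x* S x = 0`; hence `S x = 0` and
`K x = 0`. Thus every nonnegative real eigenvalue of `P` is one of `λJ₁ + J₂`. If `P` were
singular, `det(λJ₁ + J₂)` would vanish at all positive reals, and, being a polynomial in `λ`,
everywhere.
-/

namespace Matrix

section SkewPlusPosSemidef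

variable {𝕜 m : Type*} [RCLike 𝕜] [Fintype m]

lemma star_dotProduct_mulVec_of_conjTranspose_eq_neg {K : Matrix m m 𝕜} (hK : Kᴴ = -K)
    (x : m → 𝕜) : star (star x ⬝ᵥ K *ᵥ x) = -(star x ⬝ᵥ K *ᵥ x) := by
  rw [← star_dotProduct, star_mulVec, hK, dotProduct_mulVec, vecMul_neg, neg_dotProduct]

lemma mulVec_eq_zero_of_add_posSemidef {K S : Matrix m m 𝕜} (hK : Kᴴ = -K)
    (hS : S.PosSemidef) {x : m → 𝕜} (h : (K + S) *ᵥ x = 0) : S *ᵥ x = 0 := by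
  have hsum : star x ⬝ᵥ K *ᵥ x + star x ⬝ᵥ S *ᵥ x = 0 := by
    rw [← dotProduct_add, ← add_mulVec, h, dotProduct_zero]
  have hk := star_dotProduct_mulVec_of_conjTranspose_eq_neg hK x
  have hs : star (star x ⬝ᵥ S *ᵥ x) = star x ⬝ᵥ S *ᵥ x := by
    rw [← star_dotProduct, star_mulVec, hS.isHermitian.eq, dotProduct_mulVec]
  rw [← hS.dotProduct_mulVec_zero_iff]
  rw [eq_neg_of_add_eq_zero_left hsum, star_neg, neg_neg] at hk
  linear_combination -(hk + hs) / 2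

lemma det_eq_zero_of_det_add_posSemidef_eq_zero [DecidableEq m] {K S : Matrix m m 𝕜}
    (hK : Kᴴ = -K) (hS : S.PosSemidef) (h : (K + S).det = 0) : K.det = 0 := by
  obtain ⟨x, hx0, hx⟩ := exists_mulVec_eq_zero_iff.mpr h
  refine exists_mulVec_eq_zero_iff.mp ⟨x, hx0, ?_⟩
  have hSx := mulVec_eq_zero_of_add_posSemidef hK hS hx
  rwa [add_mulVec, hSx, add_zero] at hx

end SkewPlusPosSemidef

lemma det_smul_add_eq_zero_of_infinite {R m : Type*} [CommRing R] [IsDomain R] [Fintype m]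
    [DecidableEq m] {A B : Matrix m m R} (h : {z : R | (z • A + B).det = 0}.Infinite) (z : R) :
    (z • A + B).det = 0 := by
  set p : R[X] := ((X : R[X]) • A.map C + B.map C).det
  have heval : ∀ z : R, p.eval z = (z • A + B).det := by
    intro z
    rw [← coe_evalRingHom, RingHom.map_det]
    congr 1
    ext i j
    simpa using mul_comm _ _
  have hp : p = 0 := p.eq_zero_of_infinite_isRoot (by simpa only [IsRoot, heval] using h)
  rw [← heval, hp, eval_zero]

end Matrix

lemma det_ofReal_smul_add_eq_zero_of_posH {m : Type*} [Fintype m] [DecidableEq m]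
    {J₁ J₂ R₁ R₂ : Matrix m m ℂ}
    (hJ₁ : J₁ᴴ = -J₁) (hJ₂ : J₂ᴴ = -J₂) (hR₁ : R₁.PosSemidef) (hR₂ : R₂.PosSemidef)
    {α : ℝ} (hα : 0 ≤ α) (h : ((α : ℂ) • (J₁ + R₁) + (J₂ + R₂)).det = 0) :
    ((α : ℂ) • J₁ + J₂).det = 0 := by
  have hK : ((α : ℂ) • J₁ + J₂)ᴴ = -((α : ℂ) • J₁ + J₂) := by
    rw [conjTranspose_add, conjTranspose_smul, hJ₁, hJ₂, Complex.star_def, Complex.conj_ofReal,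
      smul_neg, neg_add]
  have hS : ((α : ℂ) • R₁ + R₂).PosSemidef := (hR₁.smul (Complex.zero_le_real.mpr hα)).add hR₂
  refine det_eq_zero_of_det_add_posSemidef_eq_zero hK hS ?_
  rwa [← add_add_add_comm, ← smul_add]

/-- Corollary 3.8(iii): if the skew-Hermitian pencil `λJ₁ + J₂` is regular, then
the posH pencil `P(λ) = λ(J₁+R₁) + (J₂+R₂)` is regular and every real positive
eigenvalue of `P(λ)` is also an eigenvalue of `λJ₁ + J₂`. -/
theorem posH_regular_of_skew_part_regular {n : ℕ}
    (J₁ J₂ R₁ R₂ : Matrix (Fin n) (Fin n) ℂ)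
    (hJ₁ : J₁ᴴ = -J₁) (hJ₂ : J₂ᴴ = -J₂)
    (hR₁ : R₁.PosSemidef) (hR₂ : R₂.PosSemidef)
    (hreg : ∃ μ : ℂ, (μ • J₁ + J₂).det ≠ 0) :
    (∃ μ : ℂ, (μ • (J₁ + R₁) + (J₂ + R₂)).det ≠ 0) ∧
    (∀ α : ℝ, 0 < α → ((α : ℂ) • (J₁ + R₁) + (J₂ + R₂)).det = 0 →
      ((α : ℂ) • J₁ + J₂).det = 0) := by
  have hpos : ∀ α : ℝ, 0 < α → ((α : ℂ) • (J₁ + R₁) + (J₂ + R₂)).det = 0 →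
      ((α : ℂ) • J₁ + J₂).det = 0 := fun α hα ↦
    det_ofReal_smul_add_eq_zero_of_posH hJ₁ hJ₂ hR₁ hR₂ hα.le
  refine ⟨?_, hpos⟩
  by_contra! hsing
  obtain ⟨μ, hμ⟩ := hreg
  refine hμ (det_smul_add_eq_zero_of_infinite ?_ μ)
  refine ((Set.Ioi_infinite (0 : ℝ)).image Complex.ofReal_injective.injOn).mono ?_
  rintro _ ⟨α, hα, rfl⟩
  exact hpos α hα (hsing α)
end

section
/- Let P(λ) = λ(J₁+R₁) + (J₂+R₂) be an n×n complex posH pencil, let k ≥ 2, and suppose the vectors x₁, …, x_k ∈ ℂⁿ form a Jordan chain of length k of P(λ) associated with the eigenvalue ∞, i.e., (J₁+R₁)x₁ = 0, (J₁+R₁)x_{i+1} = (J₂+R₂)x_i for i = 1, …, k−1, and (J₂+R₂)x_k ≠ 0. Let κ = ⌊(k+1)/2⌋. Then R₁x_j = 0 for j = 1, …, κ, and R₂x_j = 0 for j = 1, …, κ−1; moreover, if k = 2κ is even, then also R₂x_κ = 0. -/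
/-!
If `M = J + R` with `J` skew-Hermitian and `R` positive semidefinite, then `x* M x = 0` forces
`R x = 0`, and `R x = 0` gives `M* x = -M x`. So while the first vectors of the chain lie in the
kernels of `R₁` and `R₂`, the chain relations `A x_{i+1} = B x_i` move `B = J₂ + R₂` across
the form: `⟨x_j, B x_i⟩ = -⟨A x_j, x_{i+1}⟩ = ⟨x_{j-1}, B x_{i+1}⟩ = ⋯ = -⟨A x_1, x_{i+j}⟩ = 0`.
With `i = j` this gives `x_j* B x_j = 0`, hence `R₂ x_j = 0`, for `2j ≤ k`; with `i = j + 1` it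
gives `x_{j+1}* A x_{j+1} = 0`, hence `R₁ x_{j+1} = 0`, for `2j < k`. Induct on `j`.
-/

open Matrix
open scoped ComplexOrder

namespace Matrix

variable {n : Type*} [Fintype n]

section StarRing

variable {α : Type*} [Ring α] [StarRing α]

theorem star_dotProduct_mulVec_eq_neg_of_conjTranspose_mulVec {M : Matrix n n α} {v : n → α}
    (hv : Mᴴ *ᵥ v = -(M *ᵥ v)) (w : n → α) :
    star v ⬝ᵥ (M *ᵥ w) = -(star (M *ᵥ v) ⬝ᵥ w) := by
  rw [dotProduct_mulVec, ← conjTranspose_conjTranspose M, ← star_mulVec,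
    conjTranspose_conjTranspose, hv, star_neg, neg_dotProduct]

/-- Jordan chains `x 1, …, x k` of the pencil `λA + B` at the eigenvalue `∞`; the condition
`B *ᵥ x k ≠ 0` is not part of this definition. -/
structure IsInfiniteJordanChain (A B : Matrix n n α) (k : ℕ) (x : ℕ → n → α) : Prop where
  mulVec_one : A *ᵥ x 1 = 0
  mulVec_succ : ∀ i, 1 ≤ i → i < k → A *ᵥ x (i + 1) = B *ᵥ x i

theorem IsInfiniteJordanChain.star_dotProduct_mulVec_eq_zero {A B : Matrix n n α} {k : ℕ}
    {x : ℕ → n → α} (hx : IsInfiniteJordanChain A B k x) {j : ℕ} (hj : 1 ≤ j)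
    (hA : ∀ l, 1 ≤ l → l ≤ j → Aᴴ *ᵥ x l = -(A *ᵥ x l))
    (hB : ∀ l, 1 ≤ l → l < j → Bᴴ *ᵥ x l = -(B *ᵥ x l))
    {i : ℕ} (hi : 1 ≤ i) (hijk : i + j ≤ k) : star (x j) ⬝ᵥ (B *ᵥ x i) = 0 := by
  induction j generalizing i with
  | zero => omega
  | succ j ih =>
    rw [← hx.mulVec_succ i hi (by omega),
      star_dotProduct_mulVec_eq_neg_of_conjTranspose_mulVec (hA (j + 1) (by omega) le_rfl)]
    rcases Nat.eq_zero_or_pos j with rfl | hj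
    · rw [hx.mulVec_one, star_zero, zero_dotProduct, neg_zero]
    · rw [hx.mulVec_succ j hj (by omega),
        ← star_dotProduct_mulVec_eq_neg_of_conjTranspose_mulVec (hB j hj (by omega))]
      exact ih hj (fun l hl hlj => hA l hl (by omega)) (fun l hl hlj => hB l hl (by omega))
        (by omega) (by omega)

end StarRing

variable {𝕜 : Type*} [RCLike 𝕜] {J R : Matrix n n 𝕜}

theorem conjTranspose_add_mulVec_of_mulVec_eq_zero (hJ : Jᴴ = -J) (hR : R.IsHermitian)
    {v : n → 𝕜} (hv : R *ᵥ v = 0) : (J + R)ᴴ *ᵥ v = -((J + R) *ᵥ v) := by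
  simp [conjTranspose_add, hJ, hR.eq, add_mulVec, neg_mulVec, hv]

theorem PosSemidef.mulVec_eq_zero_of_star_dotProduct_add_mulVec (hJ : Jᴴ = -J)
    (hR : R.PosSemidef) {v : n → 𝕜} (h : star v ⬝ᵥ ((J + R) *ᵥ v) = 0) : R *ᵥ v = 0 := by
  have hadj : star v ⬝ᵥ ((J + R)ᴴ *ᵥ v) = 0 := by
    rw [mulVec_conjTranspose, star_dotProduct_star, ← dotProduct_mulVec, h, star_zero]
  rw [conjTranspose_add, hJ, hR.isHermitian.eq] at hadj
  simp only [add_mulVec, neg_mulVec, dotProduct_add, dotProduct_neg] at h hadj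
  exact (hR.dotProduct_mulVec_zero_iff v).mp (by linear_combination (h + hadj) / 2)

namespace IsInfiniteJordanChain

variable {J₁ J₂ R₁ R₂ : Matrix n n 𝕜} {k : ℕ} {x : ℕ → n → 𝕜}

theorem posSemidef_trailing_mulVec_eq_zero (hJ₁ : J₁ᴴ = -J₁) (hR₁ : R₁.IsHermitian)
    (hJ₂ : J₂ᴴ = -J₂) (hR₂ : R₂.PosSemidef)
    (hx : IsInfiniteJordanChain (J₁ + R₁) (J₂ + R₂) k x)
    {j : ℕ} (hj : 1 ≤ j) (hjk : 2 * j ≤ k) (h₁ : ∀ l, 1 ≤ l → l ≤ j → R₁ *ᵥ x l = 0)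
    (h₂ : ∀ l, 1 ≤ l → l < j → R₂ *ᵥ x l = 0) : R₂ *ᵥ x j = 0 :=
  hR₂.mulVec_eq_zero_of_star_dotProduct_add_mulVec hJ₂ <|
    hx.star_dotProduct_mulVec_eq_zero hj
      (fun l hl hlj => conjTranspose_add_mulVec_of_mulVec_eq_zero hJ₁ hR₁ (h₁ l hl hlj))
      (fun l hl hlj =>
        conjTranspose_add_mulVec_of_mulVec_eq_zero hJ₂ hR₂.isHermitian (h₂ l hl hlj))
      hj (by omega)

theorem posSemidef_leading_mulVec_succ_eq_zero (hJ₁ : J₁ᴴ = -J₁) (hR₁ : R₁.PosSemidef)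
    (hJ₂ : J₂ᴴ = -J₂) (hR₂ : R₂.IsHermitian)
    (hx : IsInfiniteJordanChain (J₁ + R₁) (J₂ + R₂) k x)
    {j : ℕ} (hj : 1 ≤ j) (hjk : 2 * j < k) (h₁ : ∀ l, 1 ≤ l → l ≤ j → R₁ *ᵥ x l = 0)
    (h₂ : ∀ l, 1 ≤ l → l ≤ j → R₂ *ᵥ x l = 0) : R₁ *ᵥ x (j + 1) = 0 := by
  have hB : ∀ l, 1 ≤ l → l ≤ j → (J₂ + R₂)ᴴ *ᵥ x l = -((J₂ + R₂) *ᵥ x l) :=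
    fun l hl hlj => conjTranspose_add_mulVec_of_mulVec_eq_zero hJ₂ hR₂ (h₂ l hl hlj)
  have horth : star (x j) ⬝ᵥ ((J₂ + R₂) *ᵥ x (j + 1)) = 0 :=
    hx.star_dotProduct_mulVec_eq_zero hj
      (fun l hl hlj =>
        conjTranspose_add_mulVec_of_mulVec_eq_zero hJ₁ hR₁.isHermitian (h₁ l hl hlj))
      (fun l hl hlj => hB l hl hlj.le) (by omega) (by omega)
  rw [star_dotProduct_mulVec_eq_neg_of_conjTranspose_mulVec (hB j hj le_rfl),
    ← hx.mulVec_succ j hj (by omega), neg_eq_zero, star_dotProduct, star_eq_zero] at horth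
  exact hR₁.mulVec_eq_zero_of_star_dotProduct_add_mulVec hJ₁ horth

theorem posSemidef_mulVec_eq_zero_of_le (hJ₁ : J₁ᴴ = -J₁) (hR₁ : R₁.PosSemidef)
    (hJ₂ : J₂ᴴ = -J₂) (hR₂ : R₂.PosSemidef)
    (hx : IsInfiniteJordanChain (J₁ + R₁) (J₂ + R₂) k x)
    {m : ℕ} (hm : 1 ≤ m) (hmk : 2 * m ≤ k + 1) :
    (∀ j, 1 ≤ j → j ≤ m → R₁ *ᵥ x j = 0) ∧ (∀ j, 1 ≤ j → j < m → R₂ *ᵥ x j = 0) := by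
  induction m, hm using Nat.le_induction with
  | base =>
    refine ⟨fun j hj hj1 => ?_, fun j hj hj1 => by omega⟩
    obtain rfl : j = 1 := by omega
    exact hR₁.mulVec_eq_zero_of_star_dotProduct_add_mulVec hJ₁
      (by rw [hx.mulVec_one, dotProduct_zero])
  | succ m hm ih =>
    obtain ⟨h₁, h₂⟩ := ih (by omega)
    have hR₂m :=
      hx.posSemidef_trailing_mulVec_eq_zero hJ₁ hR₁.isHermitian hJ₂ hR₂ hm (by omega) h₁ h₂
    have h₂' : ∀ j, 1 ≤ j → j ≤ m → R₂ *ᵥ x j = 0 := fun j hj hjm => by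
      rcases hjm.lt_or_eq with hjm | rfl
      exacts [h₂ j hj hjm, hR₂m]
    have hR₁m :=
      hx.posSemidef_leading_mulVec_succ_eq_zero hJ₁ hR₁ hJ₂ hR₂.isHermitian hm (by omega) h₁ h₂'
    refine ⟨fun j hj hjm => ?_, fun j hj hjm => h₂' j hj (by omega)⟩
    rcases Nat.le_succ_iff.mp hjm with hjm | rfl
    exacts [h₁ j hj hjm, hR₁m]

theorem posSemidef_mulVec_eq_zero (hJ₁ : J₁ᴴ = -J₁) (hR₁ : R₁.PosSemidef)
    (hJ₂ : J₂ᴴ = -J₂) (hR₂ : R₂.PosSemidef)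
    (hx : IsInfiniteJordanChain (J₁ + R₁) (J₂ + R₂) k x)
    {j : ℕ} (hj : 1 ≤ j) :
    (2 * j ≤ k + 1 → R₁ *ᵥ x j = 0) ∧ (2 * j ≤ k → R₂ *ᵥ x j = 0) := by
  refine ⟨fun hjk => (hx.posSemidef_mulVec_eq_zero_of_le hJ₁ hR₁ hJ₂ hR₂ hj hjk).1 j hj le_rfl,
    fun hjk => ?_⟩
  obtain ⟨h₁, h₂⟩ := hx.posSemidef_mulVec_eq_zero_of_le hJ₁ hR₁ hJ₂ hR₂ hj (by omega)
  exact hx.posSemidef_trailing_mulVec_eq_zero hJ₁ hR₁.isHermitian hJ₂ hR₂ hj hjk h₁ h₂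

end IsInfiniteJordanChain

end Matrix

theorem posH_infinite_jordan_chain_general {n : ℕ}
    (J₁ J₂ R₁ R₂ : Matrix (Fin n) (Fin n) ℂ)
    (hJ₁ : J₁ᴴ = -J₁) (hJ₂ : J₂ᴴ = -J₂)
    (hR₁ : R₁.PosSemidef) (hR₂ : R₂.PosSemidef)
    (k : ℕ) (hk : 2 ≤ k) (x : ℕ → (Fin n → ℂ))
    (hfirst : (J₁ + R₁) *ᵥ x 1 = 0)
    (hchain : ∀ i, 1 ≤ i → i ≤ k - 1 → (J₁ + R₁) *ᵥ x (i + 1) = (J₂ + R₂) *ᵥ x i) :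
    (∀ j, 1 ≤ j → j ≤ (k + 1) / 2 → R₁ *ᵥ x j = 0) ∧
    (∀ j, 1 ≤ j → j ≤ (k + 1) / 2 - 1 → R₂ *ᵥ x j = 0) ∧
    (k = 2 * ((k + 1) / 2) → R₂ *ᵥ x ((k + 1) / 2) = 0) := by
  have hx : IsInfiniteJordanChain (J₁ + R₁) (J₂ + R₂) k x :=
    ⟨hfirst, fun i hi hik => hchain i hi (by omega)⟩
  have hker := fun j (hj : 1 ≤ j) => hx.posSemidef_mulVec_eq_zero hJ₁ hR₁ hJ₂ hR₂ hj
  refine ⟨fun j hj hjκ => (hker j hj).1 (by omega), fun j hj hjκ => (hker j hj).2 (by omega),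
    fun heven => (hker _ (by omega)).2 (by omega)⟩

/-- Theorem 3.10: if `(x 1, …, x k)` is a Jordan chain of length `k ≥ 2` of the
posH pencil `P(λ) = λ(J₁+R₁) + (J₂+R₂)` associated with the eigenvalue `∞` and
`κ = ⌊(k+1)/2⌋`, then `x 1, …, x κ ∈ ker R₁`, `x 1, …, x (κ-1) ∈ ker R₂`, and if
`k = 2κ` is even then also `x κ ∈ ker R₂`. -/
theorem posH_infinite_jordan_chain {n : ℕ}
    (J₁ J₂ R₁ R₂ : Matrix (Fin n) (Fin n) ℂ)
    (hJ₁ : J₁ᴴ = -J₁) (hJ₂ : J₂ᴴ = -J₂)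
    (hR₁ : R₁.PosSemidef) (hR₂ : R₂.PosSemidef)
    (k : ℕ) (hk : 2 ≤ k) (x : ℕ → (Fin n → ℂ))
    (hfirst : (J₁ + R₁) *ᵥ x 1 = 0)
    (hchain : ∀ i, 1 ≤ i → i ≤ k - 1 → (J₁ + R₁) *ᵥ x (i + 1) = (J₂ + R₂) *ᵥ x i)
    (hlast : (J₂ + R₂) *ᵥ x k ≠ 0) :
    (∀ j, 1 ≤ j → j ≤ (k + 1) / 2 → R₁ *ᵥ x j = 0) ∧
    (∀ j, 1 ≤ j → j ≤ (k + 1) / 2 - 1 → R₂ *ᵥ x j = 0) ∧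
    (k = 2 * ((k + 1) / 2) → R₂ *ᵥ x ((k + 1) / 2) = 0) :=
  posH_infinite_jordan_chain_general J₁ J₂ R₁ R₂ hJ₁ hJ₂ hR₁ hR₂ k hk x hfirst hchain
end

section
/- Let P(λ) = λ(J₁+R₁) + (J₂+R₂) be an n×n complex posH pencil. If P(λ) has no common isotropic vector, i.e., there is no nonzero x ∈ ℂⁿ with x*(J₁+R₁)x = 0 and x*(J₂+R₂)x = 0, then P(λ) is regular: det(λ₀(J₁+R₁) + (J₂+R₂)) ≠ 0 for some λ₀ ∈ ℂ. -/
open Matrix Polynomial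
open scoped ComplexOrder

/-!
If the pencil is singular, its kernel over `ℂ[λ]` contains a nonzero polynomial vector `w(λ)`.
For real `t > 0`, pairing `P(t) w(t) = 0` with `w(t)` and taking real parts gives
`t · w*R₁w + w*R₂w = 0`, so `R₁ w(t) = R₂ w(t) = 0`; these are polynomial identities holding on an
infinite set, hence for every `λ`. At a non-real `λ` with `w(λ) ≠ 0` what is left is
`λ · w*J₁w + w*J₂w = 0` with both quadratic forms purely imaginary, which forces both to vanish:
`w(λ)` is a common isotropic vector.
-/

section PolynomialVectors

variable {R ι : Type*} [CommRing R]

lemma exists_mem_eval_ne_zero [IsDomain R] {S : Set R} (hS : S.Infinite) {w : ι → R[X]}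
    (hw : w ≠ 0) :
    ∃ μ ∈ S, (fun i => (w i).eval μ) ≠ 0 := by
  classical
  obtain ⟨j, hj⟩ := Function.ne_iff.mp hw
  obtain ⟨μ, hμS, hμ⟩ := hS.exists_notMem_finset (w j).roots.toFinset
  refine ⟨μ, hμS, fun h => hμ ?_⟩
  simpa [mem_roots hj] using congrFun h j

variable [Fintype ι]

lemma eval_mulVec_map_C {m : Type*} (M : Matrix m ι R) (w : ι → R[X]) (μ : R) (j : m) :
    ((M.map C *ᵥ w) j).eval μ = (M *ᵥ fun i => (w i).eval μ) j := by
  simp [mulVec, dotProduct, eval_finsetSum]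

lemma mulVec_eval_eq_zero_of_infinite [IsDomain R] {m : Type*} (M : Matrix m ι R)
    (w : ι → R[X]) {S : Set R} (hS : S.Infinite)
    (h : ∀ t ∈ S, M *ᵥ (fun i => (w i).eval t) = 0) (μ : R) :
    M *ᵥ (fun i => (w i).eval μ) = 0 := by
  have hzero : M.map C *ᵥ w = 0 := funext fun j =>
    eq_zero_of_infinite_isRoot _ <| hS.mono fun t ht => by
      simp [IsRoot, eval_mulVec_map_C, h t ht]
  ext j
  rw [← eval_mulVec_map_C, hzero]
  simp

lemma exists_polynomial_kernel_of_det_eq_zero [IsDomain R] [Infinite R] [DecidableEq ι]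
    (A B : Matrix ι ι R) (h : ∀ μ : R, (μ • A + B).det = 0) :
    ∃ w : ι → R[X], w ≠ 0 ∧ ∀ μ, (μ • A + B) *ᵥ (fun i => (w i).eval μ) = 0 := by
  set M : Matrix ι ι R[X] := (X : R[X]) • A.map C + B.map C
  have hM : ∀ μ, M.map (evalRingHom μ) = μ • A + B := by
    intro μ; ext i j; simp [M, mul_comm _ μ]
  have hdet : M.det = 0 := zero_of_eval_zero _ fun μ => by
    rw [← coe_evalRingHom, RingHom.map_det, RingHom.mapMatrix_apply, hM, h]
  obtain ⟨w, hw, hMw⟩ := exists_mulVec_eq_zero_iff.mpr hdet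
  refine ⟨w, hw, fun μ => funext fun j => ?_⟩
  have := RingHom.map_mulVec (evalRingHom μ) M w j
  rw [hMw, hM] at this
  simpa [Function.comp_def] using this.symm

end PolynomialVectors

lemma Complex.eq_zero_of_mul_add_eq_zero_of_re_eq_zero {μ a b : ℂ} (hμ : μ.im ≠ 0)
    (ha : a.re = 0) (hb : b.re = 0) (h : μ * a + b = 0) : a = 0 ∧ b = 0 := by
  have hre := congrArg Complex.re h
  simp only [add_re, mul_re, ha, hb, zero_re] at hre
  have ha' : a = 0 := Complex.ext ha (by simpa [hμ] using hre)
  exact ⟨ha', by simpa [ha'] using h⟩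

section PosHPencil

variable {ι : Type*} [Fintype ι]

lemma mul_star_dotProduct_add_eq_zero_of_mulVec_eq_zero {μ : ℂ} {A B : Matrix ι ι ℂ}
    {x : ι → ℂ} (hx : (μ • A + B) *ᵥ x = 0) :
    μ * (star x ⬝ᵥ A *ᵥ x) + star x ⬝ᵥ B *ᵥ x = 0 := by
  simpa [add_mulVec, smul_mulVec, dotProduct_add, dotProduct_smul] using
    congrArg (star x ⬝ᵥ ·) hx

lemma re_star_dotProduct_mulVec_self_of_conjTranspose_eq_neg {J : Matrix ι ι ℂ} (hJ : Jᴴ = -J)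
    (x : ι → ℂ) : (star x ⬝ᵥ J *ᵥ x).re = 0 := by
  have hIJ : (Complex.I • J).IsHermitian := by
    rw [IsHermitian, conjTranspose_smul, hJ]
    simp
  simpa [smul_mulVec, dotProduct_smul] using hIJ.im_star_dotProduct_mulVec_self x

lemma re_star_dotProduct_add_mulVec_self {J : Matrix ι ι ℂ} (hJ : Jᴴ = -J) (R : Matrix ι ι ℂ)
    (x : ι → ℂ) : (star x ⬝ᵥ (J + R) *ᵥ x).re = (star x ⬝ᵥ R *ᵥ x).re := by
  simp [add_mulVec, re_star_dotProduct_mulVec_self_of_conjTranspose_eq_neg hJ]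

lemma Matrix.PosSemidef.mulVec_eq_zero_of_re_eq_zero_s9 {R : Matrix ι ι ℂ} (hR : R.PosSemidef)
    {x : ι → ℂ} (h : (star x ⬝ᵥ R *ᵥ x).re = 0) : R *ᵥ x = 0 := by
  rw [← hR.dotProduct_mulVec_zero_iff]
  exact Complex.ext h (Complex.nonneg_iff.mp (hR.dotProduct_mulVec_nonneg x)).2.symm

variable {J₁ J₂ R₁ R₂ : Matrix ι ι ℂ} {x : ι → ℂ}

lemma mulVec_eq_zero_of_pencil_mulVec_eq_zero_of_pos (hJ₁ : J₁ᴴ = -J₁) (hJ₂ : J₂ᴴ = -J₂)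
    (hR₁ : R₁.PosSemidef) (hR₂ : R₂.PosSemidef) {t : ℝ} (ht : 0 < t)
    (hx : ((t : ℂ) • (J₁ + R₁) + (J₂ + R₂)) *ᵥ x = 0) : R₁ *ᵥ x = 0 ∧ R₂ *ᵥ x = 0 := by
  have hre := congrArg Complex.re (mul_star_dotProduct_add_eq_zero_of_mulVec_eq_zero hx)
  simp only [Complex.zero_re, Complex.add_re, Complex.re_ofReal_mul,
    re_star_dotProduct_add_mulVec_self hJ₁, re_star_dotProduct_add_mulVec_self hJ₂] at hre
  have h₁ := (Complex.nonneg_iff.mp (hR₁.dotProduct_mulVec_nonneg x)).1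
  have h₂ := (Complex.nonneg_iff.mp (hR₂.dotProduct_mulVec_nonneg x)).1
  exact ⟨hR₁.mulVec_eq_zero_of_re_eq_zero_s9 (by nlinarith),
    hR₂.mulVec_eq_zero_of_re_eq_zero_s9 (by nlinarith)⟩

lemma isotropic_of_pencil_mulVec_eq_zero_of_im_ne_zero (hJ₁ : J₁ᴴ = -J₁) (hJ₂ : J₂ᴴ = -J₂)
    {μ : ℂ} (hμ : μ.im ≠ 0) (hR₁x : R₁ *ᵥ x = 0) (hR₂x : R₂ *ᵥ x = 0)
    (hx : (μ • (J₁ + R₁) + (J₂ + R₂)) *ᵥ x = 0) :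
    star x ⬝ᵥ ((J₁ + R₁) *ᵥ x) = 0 ∧ star x ⬝ᵥ ((J₂ + R₂) *ᵥ x) = 0 := by
  have hR : ∀ J R : Matrix ι ι ℂ, R *ᵥ x = 0 → star x ⬝ᵥ ((J + R) *ᵥ x) = star x ⬝ᵥ J *ᵥ x :=
    fun J R hRx => by simp [add_mulVec, hRx]
  have hq := mul_star_dotProduct_add_eq_zero_of_mulVec_eq_zero hx
  rw [hR _ _ hR₁x, hR _ _ hR₂x] at hq ⊢
  exact Complex.eq_zero_of_mul_add_eq_zero_of_re_eq_zero hμ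
    (re_star_dotProduct_mulVec_self_of_conjTranspose_eq_neg hJ₁ x)
    (re_star_dotProduct_mulVec_self_of_conjTranspose_eq_neg hJ₂ x) hq

end PosHPencil

/-- Theorem 4.5, (d) ⇒ (e): if a posH pencil `P(λ) = λ(J₁+R₁) + (J₂+R₂)` has no
common isotropic vector, then it is regular. -/
theorem posH_regular_of_no_common_isotropic {n : ℕ}
    (J₁ J₂ R₁ R₂ : Matrix (Fin n) (Fin n) ℂ)
    (hJ₁ : J₁ᴴ = -J₁) (hJ₂ : J₂ᴴ = -J₂)
    (hR₁ : R₁.PosSemidef) (hR₂ : R₂.PosSemidef)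
    (hiso : ¬ ∃ x : Fin n → ℂ, x ≠ 0 ∧
      star x ⬝ᵥ ((J₁ + R₁) *ᵥ x) = 0 ∧ star x ⬝ᵥ ((J₂ + R₂) *ᵥ x) = 0) :
    ∃ μ : ℂ, (μ • (J₁ + R₁) + (J₂ + R₂)).det ≠ 0 := by
  by_contra! hsing
  obtain ⟨w, hw, hker⟩ := exists_polynomial_kernel_of_det_eq_zero _ _ hsing
  have hpos : ((↑) '' Set.Ioi (0 : ℝ) : Set ℂ).Infinite :=
    (Set.Ioi_infinite 0).image Complex.ofReal_injective.injOn
  have hRt : ∀ t : ℝ, 0 < t → R₁ *ᵥ (fun i => (w i).eval (t : ℂ)) = 0 ∧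
      R₂ *ᵥ (fun i => (w i).eval (t : ℂ)) = 0 := fun t ht =>
    mulVec_eq_zero_of_pencil_mulVec_eq_zero_of_pos hJ₁ hJ₂ hR₁ hR₂ ht (hker t)
  have hR₁w := mulVec_eval_eq_zero_of_infinite R₁ w hpos (by
    rintro _ ⟨t, ht, rfl⟩; exact (hRt t ht).1)
  have hR₂w := mulVec_eval_eq_zero_of_infinite R₂ w hpos (by
    rintro _ ⟨t, ht, rfl⟩; exact (hRt t ht).2)
  have hnonreal : {μ : ℂ | μ.im ≠ 0}.Infinite :=
    infinite_of_mem_nhds Complex.I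
      ((isOpen_ne_fun Complex.continuous_im continuous_const).mem_nhds (by simp))
  obtain ⟨μ, hμ, hwμ⟩ := exists_mem_eval_ne_zero hnonreal hw
  exact hiso ⟨_, hwμ, isotropic_of_pencil_mulVec_eq_zero_of_im_ne_zero hJ₁ hJ₂ hμ
    (hR₁w μ) (hR₂w μ) (hker μ)⟩
end

section
/- Let P(λ) = λ(J₁+R₁) + (J₂+R₂) be an n×n complex posH pencil with n ≥ 3. Suppose that for some choice of three distinct matrices A, B, C among the four matrices J₁, J₂, R₁, R₂ there is no nonzero x ∈ ℂⁿ with x*Ax = x*Bx = x*Cx = 0 (i.e., these three matrices have no common isotropic vector). Then the numerical range of P(λ) is not all of ℂ: there exists μ ∈ ℂ such that x*(μ(J₁+R₁) + (J₂+R₂))x ≠ 0 for every nonzero x ∈ ℂⁿ. -/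
open Matrix
open scoped ComplexOrder

namespace PosHAux

variable {n : ℕ}

variable {n : ℕ}

noncomputable def qf (M : Matrix (Fin n) (Fin n) ℂ) (x : Fin n → ℂ) : ℂ :=
  star x ⬝ᵥ (M *ᵥ x)

lemma qf_def (M : Matrix (Fin n) (Fin n) ℂ) (x : Fin n → ℂ) :
    qf M x = star x ⬝ᵥ (M *ᵥ x) := rfl

lemma qf_add (A B : Matrix (Fin n) (Fin n) ℂ) (x : Fin n → ℂ) :
    qf (A + B) x = qf A x + qf B x := by
  simp [qf, Matrix.add_mulVec, dotProduct_add]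

lemma qf_smul (c : ℂ) (M : Matrix (Fin n) (Fin n) ℂ) (x : Fin n → ℂ) :
    qf (c • M) x = c * qf M x := by
  simp [qf, Matrix.smul_mulVec, dotProduct_smul, smul_eq_mul]

lemma qf_neg (M : Matrix (Fin n) (Fin n) ℂ) (x : Fin n → ℂ) :
    qf (-M) x = - qf M x := by
  simp [qf, Matrix.neg_mulVec, dotProduct_neg]

lemma qf_conj (M : Matrix (Fin n) (Fin n) ℂ) (x : Fin n → ℂ) :
    (starRingEnd ℂ) (qf M x) = qf Mᴴ x := by
  simp only [qf, dotProduct, Matrix.mulVec, Matrix.conjTranspose_apply,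
    Pi.star_apply, map_sum, _root_.map_mul, Complex.star_def, Finset.mul_sum]
  simp only [Finset.sum_congr, RingHomCompTriple.comp_apply, Complex.conj_conj]
  rw [Finset.sum_comm]
  apply Finset.sum_congr rfl
  intro i _
  apply Finset.sum_congr rfl
  intro j _
  simp only [RingHom.id_apply]
  ring

lemma skew_re {J : Matrix (Fin n) (Fin n) ℂ} (hJ : Jᴴ = -J) (x : Fin n → ℂ) :
    (qf J x).re = 0 := by
  have h := qf_conj J x
  rw [hJ, qf_neg] at h
  have : (qf J x).re = -(qf J x).re := by
    conv_lhs => rw [← Complex.conj_re (qf J x)]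
    rw [h]
    simp
  linarith

lemma psd_im {R : Matrix (Fin n) (Fin n) ℂ} (hR : R.PosSemidef) (x : Fin n → ℂ) :
    (qf R x).im = 0 := by
  have h := hR.dotProduct_mulVec_nonneg x
  rw [Complex.le_def] at h
  exact h.2.symm

lemma psd_re_nonneg {R : Matrix (Fin n) (Fin n) ℂ} (hR : R.PosSemidef) (x : Fin n → ℂ) :
    0 ≤ (qf R x).re := by
  have h := hR.dotProduct_mulVec_nonneg x
  rw [Complex.le_def] at h
  simpa [qf_def] using h.1

lemma psd_eq_re {R : Matrix (Fin n) (Fin n) ℂ} (hR : R.PosSemidef) (x : Fin n → ℂ) :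
    qf R x = ((qf R x).re : ℂ) := by
  apply Complex.ext <;> simp [psd_im hR]

lemma psd_re_eq_zero_iff {R : Matrix (Fin n) (Fin n) ℂ} (hR : R.PosSemidef) (x : Fin n → ℂ) :
    (qf R x).re = 0 ↔ qf R x = 0 := by
  constructor
  · intro h
    rw [psd_eq_re hR, h]
    simp
  · intro h; rw [h]; simp

lemma psd_qf_zero_iff {R : Matrix (Fin n) (Fin n) ℂ} (hR : R.PosSemidef) (x : Fin n → ℂ) :
    qf R x = 0 ↔ R *ᵥ x = 0 := hR.dotProduct_mulVec_zero_iff x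

lemma qf_continuous (M : Matrix (Fin n) (Fin n) ℂ) : Continuous (qf M) := by
  have h1 : Continuous fun x : Fin n → ℂ => star x := continuous_star
  have h2 : Continuous fun x : Fin n → ℂ => M *ᵥ x :=
    (continuous_const : Continuous fun _ : Fin n → ℂ => M).matrix_mulVec continuous_id
  exact h1.dotProduct h2

lemma continuous_mulVec (M : Matrix (Fin n) (Fin n) ℂ) :
    Continuous fun x : Fin n → ℂ => M *ᵥ x :=
  (continuous_const : Continuous fun _ : Fin n → ℂ => M).matrix_mulVec continuous_id

lemma qf_real_smul (M : Matrix (Fin n) (Fin n) ℂ) (r : ℝ) (x : Fin n → ℂ) :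
    qf M (r • x) = ((r ^ 2 : ℝ) : ℂ) * qf M x := by
  have : (r • x : Fin n → ℂ) = ((r : ℂ) • x) := by
    funext i; simp [Complex.real_smul]
  rw [this]
  simp only [qf, star_smul, Matrix.mulVec_smul, smul_dotProduct, dotProduct_smul, smul_eq_mul]
  have : (star (r : ℂ)) = (r : ℂ) := by simp [Complex.star_def, Complex.conj_ofReal]
  rw [this]
  push_cast
  ring

lemma qf_expand (M : Matrix (Fin n) (Fin n) ℂ) (x y : Fin n → ℂ) (lam : ℂ) :
    qf M (x + lam • y) = qf M x + star lam * (star y ⬝ᵥ (M *ᵥ x))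
      + lam * (star x ⬝ᵥ (M *ᵥ y)) + star lam * lam * qf M y := by
  simp only [qf, Matrix.mulVec_add, Matrix.mulVec_smul, dotProduct_add, add_dotProduct,
    star_add, star_smul, smul_dotProduct, dotProduct_smul, smul_eq_mul]
  ring

lemma qf_smul_vec (M : Matrix (Fin n) (Fin n) ℂ) (c : ℂ) (x : Fin n → ℂ) :
    qf M (c • x) = star c * c * qf M x := by
  simp only [qf, star_smul, Matrix.mulVec_smul, smul_dotProduct, dotProduct_smul, smul_eq_mul]
  ring



variable {n : ℕ}

/-- Two-point lemma: if the values of the form `qf C` at `x` and `y` lie on opposite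
rays through the origin, then some nonzero vector `x + λ • y` is isotropic for `C`. -/
lemma twoPoint (C : Matrix (Fin n) (Fin n) ℂ) {x y : Fin n → ℂ}
    (hx : x ≠ 0) {c : ℝ} (hc : 0 < c) (hxy : qf C y = -(c : ℂ) * qf C x) :
    ∃ lam : ℂ, x + lam • y ≠ 0 ∧ qf C (x + lam • y) = 0 := by
  by_cases hw : qf C x = 0
  · refine ⟨0, by simpa using hx, ?_⟩
    rw [qf_expand, hw, hxy, hw]
    simp
  · set w := qf C x with hwdef
    set p := star x ⬝ᵥ (C *ᵥ y) with hpdef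
    set q := star y ⬝ᵥ (C *ᵥ x) with hqdef
    have habs : (0:ℝ) < ‖w‖ := by
      simpa using (norm_pos_iff.mpr hw)
    set u : ℂ := w / (‖w‖ : ℂ) with hudef
    have hu_ne : u ≠ 0 := by
      apply div_ne_zero hw
      exact_mod_cast habs.ne'
    have hconj_u_w : (starRingEnd ℂ) u * w = (‖w‖ : ℂ) := by
      rw [hudef]
      rw [map_div₀, Complex.conj_ofReal]
      rw [div_mul_eq_mul_div, mul_comm, Complex.mul_conj]
      rw [← Complex.sq_norm]
      push_cast
      field_simp
    set Q1 : ℂ := (starRingEnd ℂ) u * q with hQ1def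
    set P1 : ℂ := (starRingEnd ℂ) u * p with hP1def
    set a : ℝ := Q1.im + P1.im with hadef
    set b : ℝ := P1.re - Q1.re with hbdef
    obtain ⟨e, he1, he2⟩ : ∃ e : ℂ, Complex.normSq e = 1 ∧ e.re * a + e.im * b = 0 := by
      by_cases h0 : a = 0 ∧ b = 0
      · exact ⟨1, by simp, by simp [h0.1, h0.2]⟩
      · have hab : 0 < a ^ 2 + b ^ 2 := by
          rcases not_and_or.mp h0 with h | h
          · positivity
          · positivity
        set r : ℝ := Real.sqrt (a ^ 2 + b ^ 2) with hrdef
        have hr : 0 < r := Real.sqrt_pos.2 hab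
        have hr2 : r ^ 2 = a ^ 2 + b ^ 2 := Real.sq_sqrt hab.le
        refine ⟨⟨b / r, -a / r⟩, ?_, ?_⟩
        · simp only [Complex.normSq_mk]
          field_simp
          nlinarith [hr2]
        · simp only []
          field_simp
          ring
    -- the imaginary part of conj e * Q1 + e * P1 vanishes
    set Sc : ℂ := (starRingEnd ℂ) e * Q1 + e * P1 with hScdef
    have hSim : Sc.im = 0 := by
      have : Sc.im = e.re * a + e.im * b := by
        simp only [hScdef, Complex.add_im, Complex.mul_im, Complex.conj_re, Complex.conj_im,
          hadef, hbdef]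
        ring
      rw [this, he2]
    set E : ℝ := Sc.re with hEdef
    have hSc : Sc = (E : ℂ) := by
      apply Complex.ext
      · simp [hEdef]
      · simp [hSim]
    have hee : (starRingEnd ℂ) e * e = 1 := by
      rw [mul_comm, Complex.mul_conj, he1]
      norm_num
    -- real polynomial
    set W : ℝ := ‖w‖ with hWdef
    set g : ℝ → ℝ := fun ρ => W + ρ * E - c * W * ρ ^ 2 with hgdef
    have hg0 : 0 < g 0 := by simp [hgdef]; exact habs
    set ρ₁ : ℝ := max 1 ((W + |E| + 1) / (c * W)) with hρ₁def
    have hρ₁1 : 1 ≤ ρ₁ := le_max_left _ _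
    have hρ₁pos : 0 < ρ₁ := lt_of_lt_of_le one_pos hρ₁1
    have hcW : 0 < c * W := by positivity
    have hρ₁2 : W + |E| + 1 ≤ c * W * ρ₁ := by
      have : (W + |E| + 1) / (c * W) ≤ ρ₁ := le_max_right _ _
      calc W + |E| + 1 = (W + |E| + 1) / (c * W) * (c * W) := by field_simp
        _ ≤ ρ₁ * (c * W) := by
            apply mul_le_mul_of_nonneg_right this hcW.le
        _ = c * W * ρ₁ := by ring
    have hgρ₁ : g ρ₁ < 0 := by
      have h1 : ρ₁ * E ≤ ρ₁ * |E| :=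
        mul_le_mul_of_nonneg_left (le_abs_self E) hρ₁pos.le
      have h2 : c * W * ρ₁ ^ 2 = (c * W * ρ₁) * ρ₁ := by ring
      have h3 : (W + |E| + 1) * ρ₁ ≤ (c * W * ρ₁) * ρ₁ :=
        mul_le_mul_of_nonneg_right hρ₁2 hρ₁pos.le
      have h4 : W + ρ₁ * |E| < (W + |E| + 1) * ρ₁ := by nlinarith
      simp only [hgdef]
      nlinarith
    have hgcont : ContinuousOn g (Set.Icc 0 ρ₁) := by
      apply Continuous.continuousOn
      simp only [hgdef]
      exact (continuous_const.add (continuous_id'.mul continuous_const)).sub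
        (continuous_const.mul (continuous_pow 2))
    obtain ⟨ρ, hρmem, hgρ⟩ : ∃ ρ ∈ Set.Icc (0:ℝ) ρ₁, g ρ = 0 := by
      have h0 : (0:ℝ) ∈ Set.Icc (g ρ₁) (g 0) := ⟨hgρ₁.le, hg0.le⟩
      have := intermediate_value_Icc' hρ₁pos.le hgcont h0
      obtain ⟨ρ, hρ, hgρ⟩ := this
      exact ⟨ρ, hρ, hgρ⟩
    set lam : ℂ := (ρ : ℂ) * e with hlamdef
    have hstarlam : star lam = (ρ : ℂ) * (starRingEnd ℂ) e := by
      simp [hlamdef, Complex.star_def, _root_.map_mul, Complex.conj_ofReal]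
    refine ⟨lam, ?_, ?_⟩
    · -- nonvanishing
      intro hzero
      have hxeq : x = (-lam) • y := by
        have := eq_neg_of_add_eq_zero_left hzero
        rw [this]
        funext i
        simp
      have : w = star (-lam) * (-lam) * qf C y := by
        rw [hwdef, hxeq, qf_smul_vec]
      rw [hxy] at this
      have hsl : star (-lam) * (-lam) = ((Complex.normSq lam : ℝ) : ℂ) := by
        simp only [star_neg, neg_mul_neg, Complex.star_def]
        rw [mul_comm, Complex.mul_conj]
      rw [hsl] at this
      have h5 : w * (1 + (Complex.normSq lam : ℂ) * (c:ℂ)) = 0 := by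
        linear_combination this
      rcases mul_eq_zero.mp h5 with h | h
      · exact hw h
      · have : (1:ℝ) + Complex.normSq lam * c = 0 := by exact_mod_cast h
        nlinarith [Complex.normSq_nonneg lam, hc]
    · -- isotropy
      have hval : qf C (x + lam • y) = w + star lam * q + lam * p + star lam * lam * qf C y := by
        rw [qf_expand, ← hwdef, ← hpdef, ← hqdef]
      rw [hxy] at hval
      have key : (starRingEnd ℂ) u * qf C (x + lam • y) = ((g ρ : ℝ) : ℂ) := by
        rw [hval, hstarlam, hlamdef]
        have expand : (starRingEnd ℂ) u *
            (w + (ρ:ℂ) * (starRingEnd ℂ) e * q + (ρ:ℂ) * e * p +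
              (ρ:ℂ) * (starRingEnd ℂ) e * ((ρ:ℂ) * e) * (-(c:ℂ) * w)) =
            ((starRingEnd ℂ) u * w) * (1 - (c:ℂ) * (ρ:ℂ)^2 * ((starRingEnd ℂ) e * e))
              + (ρ:ℂ) * Sc := by
          simp only [hScdef, hQ1def, hP1def]
          ring
        rw [expand, hconj_u_w, hee, hSc]
        simp only [hgdef]
        push_cast
        ring
      have : (starRingEnd ℂ) u * qf C (x + lam • y) = 0 := by
        rw [key, hgρ]
        simp
      rcases mul_eq_zero.mp this with h | h
      · exact absurd h (by simpa using hu_ne)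
      · exact h


variable {n : ℕ}

lemma ksph_connected (R : Matrix (Fin n) (Fin n) ℂ)
    (hne : {x : Fin n → ℂ | ‖x‖ = 1 ∧ R *ᵥ x = 0}.Nonempty) :
    IsConnected {x : Fin n → ℂ | ‖x‖ = 1 ∧ R *ᵥ x = 0} := by
  set S : Submodule ℝ (Fin n → ℂ) :=
    (LinearMap.ker (Matrix.mulVecLin R)).restrictScalars ℝ with hSdef
  have hmemS : ∀ x : Fin n → ℂ, x ∈ S ↔ R *ᵥ x = 0 := by
    intro x
    simp [hSdef, Submodule.restrictScalars_mem, LinearMap.mem_ker, Matrix.mulVecLin_apply]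
  obtain ⟨x₀, hx₀n, hx₀k⟩ := hne
  have hx₀ne : x₀ ≠ 0 := by
    intro h; rw [h] at hx₀n; simp at hx₀n
  have hx₀S : x₀ ∈ S := (hmemS x₀).2 hx₀k
  have hIx₀S : Complex.I • x₀ ∈ S := by
    rw [hmemS]
    have : R *ᵥ (Complex.I • x₀) = Complex.I • (R *ᵥ x₀) := Matrix.mulVec_smul R Complex.I x₀
    rw [this, hx₀k, smul_zero]
  -- rank of S is at least 2
  have hrank : 1 < Module.rank ℝ ↥S := by
    have hli : LinearIndependent ℝ ![x₀, Complex.I • x₀] := by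
      rw [linearIndependent_fin2]
      constructor
      · simp only [Matrix.cons_val_one, Matrix.head_cons]
        exact smul_ne_zero Complex.I_ne_zero hx₀ne
      · intro a ha
        simp only [Matrix.cons_val_one, Matrix.head_cons, Matrix.cons_val_zero] at ha
        obtain ⟨i, hi⟩ := Function.ne_iff.mp hx₀ne
        have hi' : x₀ i ≠ 0 := by simpa using hi
        have h2 := congrFun ha i
        simp only [Pi.smul_apply, Complex.real_smul, smul_eq_mul] at h2
        have h3 : ((a : ℂ) * Complex.I - 1) * x₀ i = 0 := by linear_combination h2
        rcases mul_eq_zero.mp h3 with h | h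
        · have := congrArg Complex.re h
          simp [Complex.mul_re, Complex.I_re, Complex.I_im] at this
        · exact hi' h
    have hli2 : LinearIndependent ℝ
        (![(⟨x₀, hx₀S⟩ : ↥S), (⟨Complex.I • x₀, hIx₀S⟩ : ↥S)]) := by
      apply LinearIndependent.of_comp S.subtype
      have : (S.subtype ∘ ![(⟨x₀, hx₀S⟩ : ↥S), (⟨Complex.I • x₀, hIx₀S⟩ : ↥S)])
          = ![x₀, Complex.I • x₀] := by
        funext i
        fin_cases i <;> simp
      rw [this]
      exact hli
    have hcard := hli2.cardinal_le_rank
    simp only [Cardinal.mk_fintype, Fintype.card_fin] at hcard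
    calc (1 : Cardinal) < 2 := Cardinal.one_lt_two
      _ ≤ Module.rank ℝ ↥S := by exact_mod_cast hcard
  have hconn : IsConnected (Metric.sphere (0 : ↥S) 1) :=
    isConnected_sphere hrank 0 zero_le_one
  have himg : IsConnected (Subtype.val '' (Metric.sphere (0 : ↥S) 1)) :=
    hconn.image _ continuous_subtype_val.continuousOn
  have heq : Subtype.val '' (Metric.sphere (0 : ↥S) 1)
      = {x : Fin n → ℂ | ‖x‖ = 1 ∧ R *ᵥ x = 0} := by
    ext z
    constructor
    · rintro ⟨⟨y, hyS⟩, hy1, rfl⟩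
      rw [Metric.mem_sphere, dist_zero_right] at hy1
      exact ⟨hy1, (hmemS y).1 hyS⟩
    · rintro ⟨hz1, hzk⟩
      refine ⟨⟨z, (hmemS z).2 hzk⟩, ?_, rfl⟩
      rw [Metric.mem_sphere, dist_zero_right]
      exact hz1
  rw [heq] at himg
  exact himg


variable {n : ℕ}

lemma halfplane (C R : Matrix (Fin n) (Fin n) ℂ) (hR : R.PosSemidef)
    (hnc : ∀ x : Fin n → ℂ, x ≠ 0 → ¬(qf C x = 0 ∧ qf R x = 0)) :
    ∃ cr ci : ℝ, ∀ x : Fin n → ℂ, ‖x‖ = 1 ∧ R *ᵥ x = 0 →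
      0 < cr * (qf C x).re + ci * (qf C x).im := by
  set K := {x : Fin n → ℂ | ‖x‖ = 1 ∧ R *ᵥ x = 0} with hKdef
  by_cases hKe : K.Nonempty
  swap
  · exact ⟨0, 0, fun x hx => absurd ⟨x, hx⟩ hKe⟩
  have hx0ne : ∀ x ∈ K, x ≠ 0 := by
    intro x hx h0
    rw [h0] at hx
    simp [hKdef] at hx
  have hCne : ∀ x ∈ K, qf C x ≠ 0 := by
    intro x hx h0
    exact hnc x (hx0ne x hx) ⟨h0, by rw [psd_qf_zero_iff hR]; exact hx.2⟩
  have hanti : ∀ x ∈ K, ∀ y ∈ K, ∀ c : ℝ, 0 < c → qf C y ≠ -(c : ℂ) * qf C x := by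
    intro x hx y hy c hc heq
    obtain ⟨lam, hnz, hiso⟩ := twoPoint C (hx0ne x hx) hc heq
    refine hnc _ hnz ⟨hiso, ?_⟩
    rw [psd_qf_zero_iff hR]
    have : R *ᵥ (x + lam • y) = R *ᵥ x + lam • (R *ᵥ y) := by
      rw [Matrix.mulVec_add, Matrix.mulVec_smul]
    rw [this, hx.2, hy.2]
    simp
  obtain ⟨x₀, hx₀⟩ := hKe
  set v₀ := qf C x₀ with hv₀def
  have hv₀ : v₀ ≠ 0 := hCne x₀ hx₀
  set θ : (Fin n → ℂ) → ℝ := fun x => Complex.arg (qf C x / v₀) with hθdef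
  have hzne : ∀ x ∈ K, qf C x / v₀ ≠ 0 := fun x hx => div_ne_zero (hCne x hx) hv₀
  have hzmul : ∀ x ∈ K, (qf C x / v₀) * v₀ = qf C x := fun x _ => div_mul_cancel₀ _ hv₀
  have hslit : ∀ x ∈ K, qf C x / v₀ ∈ Complex.slitPlane := by
    intro x hx
    rw [Complex.mem_slitPlane_iff]
    by_contra hcon
    push_neg at hcon
    obtain ⟨h1, h2⟩ := hcon
    set z := qf C x / v₀ with hz
    have hzre : z.re < 0 := by
      rcases lt_or_eq_of_le h1 with h | h
      · exact h
      · exfalso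
        apply hzne x hx
        apply Complex.ext
        · simpa using h
        · simpa using h2
    have hzeq : z = ((z.re : ℝ) : ℂ) := by
      apply Complex.ext
      · simp
      · simpa using h2
    have hq : qf C x = ((z.re : ℝ) : ℂ) * v₀ := by
      rw [← hzeq]; exact (hzmul x hx).symm
    apply hanti x₀ hx₀ x hx (-z.re) (by linarith)
    rw [hq]
    push_cast
    ring
  have hθcont : ContinuousOn θ K := by
    intro x hx
    have hf : ContinuousAt (fun y => qf C y / v₀) x :=
      ((qf_continuous C).div_const v₀).continuousAt
    have hca : ContinuousAt (Complex.arg ∘ fun y => qf C y / v₀) x :=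
      ContinuousAt.comp (f := fun y => qf C y / v₀) (Complex.continuousAt_arg (hslit x hx)) hf
    have : ContinuousAt θ x := by
      simpa [hθdef, Function.comp_def] using hca
    exact this.continuousWithinAt
  have hKcomp : IsCompact K := by
    have heq : K = Metric.sphere (0 : Fin n → ℂ) 1 ∩ {x | R *ᵥ x = 0} := by
      ext x
      simp [hKdef, mem_sphere_zero_iff_norm]
    rw [heq]
    exact (isCompact_sphere 0 1).inter_right
      (isClosed_singleton.preimage (continuous_mulVec R))
  have hKconn : IsConnected K := ksph_connected R ⟨x₀, hx₀⟩
  obtain ⟨xm, hxm, hmin⟩ := hKcomp.exists_isMinOn ⟨x₀, hx₀⟩ hθcont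
  obtain ⟨xM, hxM, hmax⟩ := hKcomp.exists_isMaxOn ⟨x₀, hx₀⟩ hθcont
  set m := θ xm with hmdef
  set Mv := θ xM with hMvdef
  have hmM : Mv - m < Real.pi := by
    by_contra hge
    push_neg at hge
    have hmem : m + Real.pi ∈ Set.Icc m Mv :=
      ⟨by linarith [Real.pi_pos], by linarith⟩
    have hsub : Set.Icc m Mv ⊆ θ '' K :=
      hKconn.isPreconnected.intermediate_value hxm hxM hθcont
    obtain ⟨xb, hxb, hθxb⟩ := hsub hmem
    -- derive an antipodal pair
    have hza := Complex.norm_mul_exp_arg_mul_I (qf C xm / v₀)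
    have hzb := Complex.norm_mul_exp_arg_mul_I (qf C xb / v₀)
    have hargm : Complex.arg (qf C xm / v₀) = m := rfl
    have hargb : Complex.arg (qf C xb / v₀) = m + Real.pi := hθxb
    rw [hargm] at hza
    rw [hargb] at hzb
    have hexp : Complex.exp (((m + Real.pi : ℝ) : ℂ) * Complex.I)
        = - Complex.exp ((m : ℝ) * Complex.I) := by
      push_cast
      rw [add_mul, Complex.exp_add, Complex.exp_pi_mul_I]
      ring
    have habsm : (0:ℝ) < ‖qf C xm / v₀‖ :=
      norm_pos_iff.mpr (hzne xm hxm)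
    have habsb : (0:ℝ) < ‖qf C xb / v₀‖ :=
      norm_pos_iff.mpr (hzne xb hxb)
    set c : ℝ := ‖qf C xb / v₀‖ / ‖qf C xm / v₀‖ with hcdef
    have hc : 0 < c := div_pos habsb habsm
    apply hanti xm hxm xb hxb c hc
    have h1 : qf C xb = (qf C xb / v₀) * v₀ := (hzmul xb hxb).symm
    have h2 : qf C xm = (qf C xm / v₀) * v₀ := (hzmul xm hxm).symm
    have hcast : ((c : ℝ) : ℂ) * ((‖qf C xm / v₀‖ : ℝ) : ℂ)
        = ((‖qf C xb / v₀‖ : ℝ) : ℂ) := by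
      rw [hcdef]
      push_cast
      rw [div_mul_cancel₀]
      exact_mod_cast habsm.ne'
    rw [h1, h2, ← hzb, ← hza, hexp]
    linear_combination Complex.exp ((m : ℝ) * Complex.I) * v₀ * hcast
  -- now build the separating functional
  set mid := (m + Mv) / 2 with hmiddef
  set U := v₀ * Complex.exp ((mid : ℝ) * Complex.I) with hUdef
  refine ⟨U.re, U.im, ?_⟩
  intro x hx
  have hkey : U.re * (qf C x).re + U.im * (qf C x).im
      = ((starRingEnd ℂ) U * qf C x).re := by
    simp [Complex.mul_re]
  rw [hkey]
  have hθx1 : m ≤ θ x := hmin hx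
  have hθx2 : θ x ≤ Mv := hmax hx
  have hzx := Complex.norm_mul_exp_arg_mul_I (qf C x / v₀)
  have hUconj : (starRingEnd ℂ) U
      = (starRingEnd ℂ) v₀ * Complex.exp (-((mid : ℝ) * Complex.I)) := by
    rw [hUdef, _root_.map_mul]
    congr 1
    rw [← Complex.exp_conj]
    congr 1
    simp [Complex.conj_ofReal]
  have hval : (starRingEnd ℂ) U * qf C x
      = ((Complex.normSq v₀ : ℝ) : ℂ) * ((‖qf C x / v₀‖ : ℝ) : ℂ)
        * Complex.exp (((θ x - mid : ℝ) : ℂ) * Complex.I) := by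
    have h1 : qf C x = (qf C x / v₀) * v₀ := (hzmul x hx).symm
    have hsplit : ((θ x - mid : ℝ) : ℂ) * Complex.I
        = ((θ x : ℝ) : ℂ) * Complex.I + (-(((mid : ℝ) : ℂ) * Complex.I)) := by
      push_cast
      ring
    have hns : (starRingEnd ℂ) v₀ * v₀ = ((Complex.normSq v₀ : ℝ) : ℂ) := by
      rw [mul_comm, Complex.mul_conj]
    have hargx : Complex.arg (qf C x / v₀) = θ x := rfl
    rw [hUconj]
    conv_lhs => rw [h1, ← hzx, hargx]
    rw [hsplit, Complex.exp_add, ← hns]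
    ring
  rw [hval]
  have hre : (((Complex.normSq v₀ : ℝ) : ℂ) * ((‖qf C x / v₀‖ : ℝ) : ℂ)
      * Complex.exp (((θ x - mid : ℝ) : ℂ) * Complex.I)).re
      = Complex.normSq v₀ * ‖qf C x / v₀‖ * Real.cos (θ x - mid) := by
    rw [mul_assoc, Complex.re_ofReal_mul, Complex.re_ofReal_mul,
      Complex.exp_ofReal_mul_I_re]
    ring
  rw [hre]
  have hcos : 0 < Real.cos (θ x - mid) := by
    apply Real.cos_pos_of_mem_Ioo
    constructor
    · simp only [hmiddef]
      linarith [Real.pi_pos]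
    · simp only [hmiddef]
      linarith [Real.pi_pos]
  have hns : 0 < Complex.normSq v₀ := Complex.normSq_pos.2 hv₀
  have habs : 0 < ‖qf C x / v₀‖ := norm_pos_iff.mpr (hzne x hx)
  positivity


variable {n : ℕ}

lemma lift_beta (C R : Matrix (Fin n) (Fin n) ℂ) (hR : R.PosSemidef) (cr ci : ℝ)
    (hK : ∀ x : Fin n → ℂ, ‖x‖ = 1 ∧ R *ᵥ x = 0 →
      0 < cr * (qf C x).re + ci * (qf C x).im) :
    ∃ β : ℝ, 1 ≤ β ∧ ∀ x : Fin n → ℂ, ‖x‖ = 1 →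
      0 < cr * (qf C x).re + ci * (qf C x).im + β * (qf R x).re := by
  set F : (Fin n → ℂ) → ℝ := fun x => cr * (qf C x).re + ci * (qf C x).im with hFdef
  have hFcont : Continuous F := by
    apply Continuous.add
    · exact continuous_const.mul (Complex.continuous_re.comp (qf_continuous C))
    · exact continuous_const.mul (Complex.continuous_im.comp (qf_continuous C))
  have hrcont : Continuous fun x : Fin n → ℂ => (qf R x).re :=
    Complex.continuous_re.comp (qf_continuous R)
  set D := Metric.sphere (0 : Fin n → ℂ) 1 ∩ {x | F x ≤ 0} with hDdef
  have hDcomp : IsCompact D :=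
    (isCompact_sphere 0 1).inter_right (isClosed_le hFcont continuous_const)
  by_cases hD : D.Nonempty
  · obtain ⟨xd, hxd, hrmin⟩ := hDcomp.exists_isMinOn hD hrcont.continuousOn
    have hxd1 : ‖xd‖ = 1 := by
      have := hxd.1
      rwa [Metric.mem_sphere, dist_zero_right] at this
    have hδ : 0 < (qf R xd).re := by
      rcases lt_or_eq_of_le (psd_re_nonneg hR xd) with h | h
      · exact h
      · exfalso
        have hker : R *ᵥ xd = 0 := by
          rw [← psd_qf_zero_iff hR, ← psd_re_eq_zero_iff hR]
          exact h.symm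
        have hpos := hK xd ⟨hxd1, hker⟩
        have hneg : F xd ≤ 0 := hxd.2
        simp only [hFdef] at hneg
        linarith
    obtain ⟨xe, hxe, hFmin⟩ := hDcomp.exists_isMinOn hD hFcont.continuousOn
    have hFe : F xe ≤ 0 := hxe.2
    set δ := (qf R xd).re with hδdef
    set mF := F xe with hmFdef
    set B : ℝ := max 1 ((1 - mF) / δ) with hBdef
    have hB1 : (1:ℝ) ≤ B := le_max_left _ _
    refine ⟨B, hB1, ?_⟩
    intro x hx1
    by_cases hFx : 0 < F x
    · have h1 : 0 ≤ (qf R x).re := psd_re_nonneg hR x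
      have h3 := mul_nonneg (le_trans zero_le_one hB1) h1
      simp only [hFdef] at hFx
      linarith
    · have hxD : x ∈ D :=
        ⟨by rwa [Metric.mem_sphere, dist_zero_right], not_lt.mp hFx⟩
      have h1 : δ ≤ (qf R x).re := hrmin hxD
      have h2 : mF ≤ F x := hFmin hxD
      have h4 : (1 - mF) / δ * δ = 1 - mF := by field_simp
      have h5 : (1 - mF) / δ * δ ≤ B * (qf R x).re := by
        apply mul_le_mul (le_max_right _ _) h1 hδ.le
        exact le_trans zero_le_one hB1
      have h6 : 1 - mF ≤ B * (qf R x).re := by rw [← h4]; exact h5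
      simp only [hFdef] at h2
      linarith
  · refine ⟨1, le_refl 1, ?_⟩
    intro x hx1
    have hF : 0 < F x := by
      by_contra hcon
      exact hD ⟨x, ⟨by rwa [Metric.mem_sphere, dist_zero_right], not_lt.mp hcon⟩⟩
    have h1 : 0 ≤ (qf R x).re := psd_re_nonneg hR x
    simp only [hFdef] at hF
    linarith

lemma pair_combined (C R : Matrix (Fin n) (Fin n) ℂ) (hR : R.PosSemidef)
    (hnc : ∀ x : Fin n → ℂ, x ≠ 0 → ¬(qf C x = 0 ∧ qf R x = 0)) :
    ∃ cr ci β : ℝ, 1 ≤ β ∧ ∀ x : Fin n → ℂ, x ≠ 0 →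
      0 < cr * (qf C x).re + ci * (qf C x).im + β * (qf R x).re := by
  obtain ⟨cr, ci, hK⟩ := halfplane C R hR hnc
  obtain ⟨β, hβ, hsph⟩ := lift_beta C R hR cr ci hK
  refine ⟨cr, ci, β, hβ, ?_⟩
  intro x hx
  have hnorm : ‖x‖ ≠ 0 := norm_ne_zero_iff.mpr hx
  set y : Fin n → ℂ := (‖x‖⁻¹ : ℝ) • x with hydef
  have hy1 : ‖y‖ = 1 := norm_smul_inv_norm (𝕜 := ℝ) hx
  have hxy : x = (‖x‖ : ℝ) • y := by
    rw [hydef, smul_smul, mul_inv_cancel₀ hnorm, one_smul]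
  have hCx : qf C x = ((‖x‖ ^ 2 : ℝ) : ℂ) * qf C y := by
    conv_lhs => rw [hxy]
    exact qf_real_smul C ‖x‖ y
  have hRx : qf R x = ((‖x‖ ^ 2 : ℝ) : ℂ) * qf R y := by
    conv_lhs => rw [hxy]
    exact qf_real_smul R ‖x‖ y
  have hsq : 0 < ‖x‖ ^ 2 := by positivity
  have h := hsph y hy1
  rw [hCx, hRx]
  simp only [Complex.re_ofReal_mul, Complex.im_ofReal_mul]
  nlinarith [mul_pos hsq h]

lemma pencil_val (A B : Matrix (Fin n) (Fin n) ℂ) (μ : ℂ) (x : Fin n → ℂ) :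
    star x ⬝ᵥ ((μ • A + B) *ᵥ x) = μ * qf A x + qf B x := by
  simp [qf, Matrix.add_mulVec, Matrix.smul_mulVec, dotProduct_add,
    dotProduct_smul, smul_eq_mul]

lemma main_nondeg (J₁ J₂ R₁ R₂ : Matrix (Fin n) (Fin n) ℂ)
    (hJ₁ : J₁ᴴ = -J₁) (hJ₂ : J₂ᴴ = -J₂)
    (hR₁ : R₁.PosSemidef) (hR₂ : R₂.PosSemidef)
    (α α' β γ : ℝ) (hnd : α' ≠ 0 ∨ γ ≠ 0)
    (hpos : ∀ x : Fin n → ℂ, x ≠ 0 →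
      0 < α * (qf J₁ x).im + α' * (qf J₂ x).im + β * (qf R₁ x).re + γ * (qf R₂ x).re) :
    ∃ μ : ℂ, ∀ x : Fin n → ℂ, x ≠ 0 →
      star x ⬝ᵥ ((μ • (J₁ + R₁) + (J₂ + R₂)) *ᵥ x) ≠ 0 := by
  set d : ℝ := α' ^ 2 + γ ^ 2 with hddef
  have hd : 0 < d := by
    rcases hnd with h | h
    · have : 0 < α' ^ 2 := by positivity
      nlinarith [sq_nonneg γ]
    · have : 0 < γ ^ 2 := by positivity
      nlinarith [sq_nonneg α']
  set s : ℝ := (α' * α + γ * β) / d with hsdef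
  set t : ℝ := (α' * β - γ * α) / d with htdef
  have hs1 : α' * s - γ * t = α := by
    rw [hsdef, htdef, hddef]
    field_simp
    linear_combination α * mul_inv_cancel₀ (show α' ^ 2 + γ ^ 2 ≠ 0 from hd.ne')
  have hs2 : α' * t + γ * s = β := by
    rw [hsdef, htdef, hddef]
    field_simp
    linear_combination β * mul_inv_cancel₀ (show α' ^ 2 + γ ^ 2 ≠ 0 from hd.ne')
  refine ⟨(s : ℂ) + (t : ℂ) * Complex.I, ?_⟩
  intro x hx hzero
  rw [pencil_val] at hzero
  have e1 : (qf (J₁ + R₁) x).re = (qf R₁ x).re := by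
    rw [qf_add, Complex.add_re, skew_re hJ₁, zero_add]
  have e2 : (qf (J₁ + R₁) x).im = (qf J₁ x).im := by
    rw [qf_add, Complex.add_im, psd_im hR₁, add_zero]
  have e3 : (qf (J₂ + R₂) x).re = (qf R₂ x).re := by
    rw [qf_add, Complex.add_re, skew_re hJ₂, zero_add]
  have e4 : (qf (J₂ + R₂) x).im = (qf J₂ x).im := by
    rw [qf_add, Complex.add_im, psd_im hR₂, add_zero]
  have hre : s * (qf R₁ x).re - t * (qf J₁ x).im + (qf R₂ x).re = 0 := by
    have h := congrArg Complex.re hzero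
    simp only [Complex.add_re, Complex.mul_re, Complex.add_im, Complex.mul_im,
      Complex.ofReal_re, Complex.ofReal_im, Complex.I_re, Complex.I_im,
      Complex.zero_re, e1, e2, e3, e4] at h
    linarith
  have him : s * (qf J₁ x).im + t * (qf R₁ x).re + (qf J₂ x).im = 0 := by
    have h := congrArg Complex.im hzero
    simp only [Complex.add_re, Complex.mul_re, Complex.add_im, Complex.mul_im,
      Complex.ofReal_re, Complex.ofReal_im, Complex.I_re, Complex.I_im,
      Complex.zero_im, e1, e2, e3, e4] at h
    linarith
  have hp := hpos x hx
  have k1 : α' * (s * (qf J₁ x).im + t * (qf R₁ x).re + (qf J₂ x).im) = 0 := by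
    rw [him]; ring
  have k2 : γ * (s * (qf R₁ x).re - t * (qf J₁ x).im + (qf R₂ x).re) = 0 := by
    rw [hre]; ring
  have k3 : (qf J₁ x).im * (α' * s - γ * t) = (qf J₁ x).im * α := by rw [hs1]
  have k4 : (qf R₁ x).re * (α' * t + γ * s) = (qf R₁ x).re * β := by rw [hs2]
  nlinarith [hp, k1, k2, k3, k4]

lemma main_q1ne (hn : 0 < n) (J₁ J₂ R₁ R₂ : Matrix (Fin n) (Fin n) ℂ)
    (hq : ∀ x : Fin n → ℂ, ‖x‖ = 1 → qf (J₁ + R₁) x ≠ 0) :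
    ∃ μ : ℂ, ∀ x : Fin n → ℂ, x ≠ 0 →
      star x ⬝ᵥ ((μ • (J₁ + R₁) + (J₂ + R₂)) *ᵥ x) ≠ 0 := by
  haveI : Nonempty (Fin n) := ⟨⟨0, hn⟩⟩
  have hsne : (Metric.sphere (0 : Fin n → ℂ) 1).Nonempty :=
    NormedSpace.sphere_nonempty.mpr zero_le_one
  have h1c : Continuous fun x : Fin n → ℂ => ‖qf (J₁ + R₁) x‖ :=
    continuous_norm.comp (qf_continuous _)
  have h2c : Continuous fun x : Fin n → ℂ => ‖qf (J₂ + R₂) x‖ :=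
    continuous_norm.comp (qf_continuous _)
  obtain ⟨xm, hxm, hmin⟩ :=
    (isCompact_sphere (0 : Fin n → ℂ) 1).exists_isMinOn hsne h1c.continuousOn
  obtain ⟨xM, hxM, hmax⟩ :=
    (isCompact_sphere (0 : Fin n → ℂ) 1).exists_isMaxOn hsne h2c.continuousOn
  set δ := ‖qf (J₁ + R₁) xm‖ with hδdef
  set Mv := ‖qf (J₂ + R₂) xM‖ with hMvdef
  have hxm1 : ‖xm‖ = 1 := by
    have := hxm
    rwa [Metric.mem_sphere, dist_zero_right] at this
  have hδpos : 0 < δ := norm_pos_iff.mpr (hq xm hxm1)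
  have hMv0 : 0 ≤ Mv := norm_nonneg _
  refine ⟨(((Mv + 1) / δ : ℝ) : ℂ), ?_⟩
  intro x hx hzero
  rw [pencil_val] at hzero
  have hnorm : ‖x‖ ≠ 0 := norm_ne_zero_iff.mpr hx
  set y : Fin n → ℂ := (‖x‖⁻¹ : ℝ) • x with hydef
  have hy1 : ‖y‖ = 1 := norm_smul_inv_norm (𝕜 := ℝ) hx
  have hxy : x = (‖x‖ : ℝ) • y := by
    rw [hydef, smul_smul, mul_inv_cancel₀ hnorm, one_smul]
  have hC1 : qf (J₁ + R₁) x = ((‖x‖ ^ 2 : ℝ) : ℂ) * qf (J₁ + R₁) y := by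
    conv_lhs => rw [hxy]
    exact qf_real_smul _ ‖x‖ y
  have hC2 : qf (J₂ + R₂) x = ((‖x‖ ^ 2 : ℝ) : ℂ) * qf (J₂ + R₂) y := by
    conv_lhs => rw [hxy]
    exact qf_real_smul _ ‖x‖ y
  rw [hC1, hC2] at hzero
  have hsq : ((‖x‖ ^ 2 : ℝ) : ℂ) ≠ 0 := by
    simp only [ne_eq, Complex.ofReal_eq_zero]
    positivity
  have hzero' : (((Mv + 1) / δ : ℝ) : ℂ) * qf (J₁ + R₁) y + qf (J₂ + R₂) y = 0 := by
    have h : ((‖x‖ ^ 2 : ℝ) : ℂ) *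
        ((((Mv + 1) / δ : ℝ) : ℂ) * qf (J₁ + R₁) y + qf (J₂ + R₂) y) = 0 := by
      rw [← hzero]; ring
    exact (mul_eq_zero.mp h).resolve_left hsq
  have heq : qf (J₂ + R₂) y = -(((Mv + 1) / δ : ℝ) : ℂ) * qf (J₁ + R₁) y := by
    linear_combination hzero'
  have hy0 : y ∈ Metric.sphere (0 : Fin n → ℂ) 1 := by
    rw [Metric.mem_sphere, dist_zero_right]; exact hy1
  have habs : ‖qf (J₂ + R₂) y‖ = (Mv + 1) / δ * ‖qf (J₁ + R₁) y‖ := by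
    rw [heq, norm_mul]
    congr 1
    rw [norm_neg, Complex.norm_real, Real.norm_of_nonneg]
    positivity
  have h1 : δ ≤ ‖qf (J₁ + R₁) y‖ := hmin hy0
  have h2 : ‖qf (J₂ + R₂) y‖ ≤ Mv := hmax hy0
  have h3 : (Mv + 1) / δ * δ ≤ (Mv + 1) / δ * ‖qf (J₁ + R₁) y‖ := by
    apply mul_le_mul_of_nonneg_left h1
    positivity
  have h4 : (Mv + 1) / δ * δ = Mv + 1 := by field_simp
  linarith



end PosHAux

open PosHAux

/-- Three matrices `A, B, C` have no common isotropic vector if there is no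
nonzero `x` with `x*Ax = x*Bx = x*Cx = 0`. -/
def NoCommonIsotropicVector {n : ℕ} (A B C : Matrix (Fin n) (Fin n) ℂ) : Prop :=
  ∀ x : Fin n → ℂ, x ≠ 0 →
    ¬ (star x ⬝ᵥ (A *ᵥ x) = 0 ∧ star x ⬝ᵥ (B *ᵥ x) = 0 ∧ star x ⬝ᵥ (C *ᵥ x) = 0)

variable {n : ℕ}

lemma psd_add_zero {R₁ R₂ : Matrix (Fin n) (Fin n) ℂ}
    (hR₁ : R₁.PosSemidef) (hR₂ : R₂.PosSemidef) (x : Fin n → ℂ)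
    (h : qf (R₁ + R₂) x = 0) : qf R₁ x = 0 ∧ qf R₂ x = 0 := by
  have hre : (qf R₁ x).re + (qf R₂ x).re = 0 := by
    have := congrArg Complex.re h
    rwa [qf_add, Complex.add_re, Complex.zero_re] at this
  have h1 : (qf R₁ x).re = 0 := by
    linarith [psd_re_nonneg hR₁ x, psd_re_nonneg hR₂ x]
  have h2 : (qf R₂ x).re = 0 := by linarith
  exact ⟨(psd_re_eq_zero_iff hR₁ x).mp h1, (psd_re_eq_zero_iff hR₂ x).mp h2⟩


/-- Theorem 4.8: let `P(λ) = λ(J₁+R₁) + (J₂+R₂)` be a posH pencil with `n ≥ 3`.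
If some three of the four matrices `J₁, J₂, R₁, R₂` do not have a common
isotropic vector, then the numerical range of `P(λ)` is not all of `ℂ`. -/
theorem posH_numrange_not_all_of_three_no_isotropic {n : ℕ} (hn : 3 ≤ n)
    (J₁ J₂ R₁ R₂ : Matrix (Fin n) (Fin n) ℂ)
    (hJ₁ : J₁ᴴ = -J₁) (hJ₂ : J₂ᴴ = -J₂)
    (hR₁ : R₁.PosSemidef) (hR₂ : R₂.PosSemidef)
    (h : NoCommonIsotropicVector J₁ J₂ R₁ ∨ NoCommonIsotropicVector J₁ J₂ R₂ ∨
         NoCommonIsotropicVector J₁ R₁ R₂ ∨ NoCommonIsotropicVector J₂ R₁ R₂) :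
    ∃ μ : ℂ, ∀ x : Fin n → ℂ, x ≠ 0 →
      star x ⬝ᵥ ((μ • (J₁ + R₁) + (J₂ + R₂)) *ᵥ x) ≠ 0 := by
  have hn0 : 0 < n := by omega
  -- the matrix C with qf C = a₁ + i a₂
  set C12 : Matrix (Fin n) (Fin n) ℂ := J₂ + (-Complex.I) • J₁ with hC12def
  have hC12re : ∀ x : Fin n → ℂ, (qf C12 x).re = (qf J₁ x).im := by
    intro x
    rw [hC12def, qf_add, qf_smul, Complex.add_re, skew_re hJ₂, Complex.mul_re]
    simp
  have hC12im : ∀ x : Fin n → ℂ, (qf C12 x).im = (qf J₂ x).im := by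
    intro x
    rw [hC12def, qf_add, qf_smul, Complex.add_im, Complex.mul_im]
    simp [skew_re hJ₁]
  have hC12zero : ∀ x : Fin n → ℂ, qf C12 x = 0 → qf J₁ x = 0 ∧ qf J₂ x = 0 := by
    intro x hx
    constructor
    · apply Complex.ext
      · rw [skew_re hJ₁]; simp
      · rw [← hC12re x, hx] <;> simp
    · apply Complex.ext
      · rw [skew_re hJ₂]; simp
      · rw [← hC12im x, hx] <;> simp
  -- the matrix with qf = a₁ (real)
  set C3 : Matrix (Fin n) (Fin n) ℂ := (-Complex.I) • J₁ with hC3def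
  have hC3re : ∀ x : Fin n → ℂ, (qf C3 x).re = (qf J₁ x).im := by
    intro x
    rw [hC3def, qf_smul, Complex.mul_re]
    simp
  have hC3im : ∀ x : Fin n → ℂ, (qf C3 x).im = 0 := by
    intro x
    rw [hC3def, qf_smul, Complex.mul_im]
    simp [skew_re hJ₁]
  have hC3zero : ∀ x : Fin n → ℂ, qf C3 x = 0 → qf J₁ x = 0 := by
    intro x hx
    apply Complex.ext
    · rw [skew_re hJ₁]; simp
    · rw [← hC3re x, hx] <;> simp
  rcases h with hnc | hnc | hnc | hnc
  · -- case 1 : J₁ J₂ R₁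
    obtain ⟨cr, ci, β, hβ, hpos⟩ := pair_combined C12 R₁ hR₁ (by
      intro x hx ⟨hc, hr⟩
      exact hnc x hx ⟨(hC12zero x hc).1, (hC12zero x hc).2, hr⟩)
    by_cases hci : ci = 0
    · apply main_q1ne hn0
      intro x hx1 h0
      have hx : x ≠ 0 := by
        intro h; rw [h] at hx1; simp at hx1
      have hr1 : (qf R₁ x).re = 0 := by
        have := congrArg Complex.re h0
        rwa [qf_add, Complex.add_re, skew_re hJ₁, zero_add, Complex.zero_re] at this
      have ha1 : (qf J₁ x).im = 0 := by
        have := congrArg Complex.im h0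
        rwa [qf_add, Complex.add_im, psd_im hR₁, add_zero, Complex.zero_im] at this
      have hp := hpos x hx
      rw [hC12re x, hC12im x] at hp
      rw [ha1, hr1, hci] at hp
      simp at hp
    · apply main_nondeg J₁ J₂ R₁ R₂ hJ₁ hJ₂ hR₁ hR₂ cr ci β 0 (Or.inl hci)
      intro x hx
      have hp := hpos x hx
      rw [hC12re x, hC12im x] at hp
      linarith
  · -- case 2 : J₁ J₂ R₂
    obtain ⟨cr, ci, β, hβ, hpos⟩ := pair_combined C12 R₂ hR₂ (by
      intro x hx ⟨hc, hr⟩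
      exact hnc x hx ⟨(hC12zero x hc).1, (hC12zero x hc).2, hr⟩)
    apply main_nondeg J₁ J₂ R₁ R₂ hJ₁ hJ₂ hR₁ hR₂ cr ci 0 β
      (Or.inr (by linarith))
    intro x hx
    have hp := hpos x hx
    rw [hC12re x, hC12im x] at hp
    linarith
  · -- case 3 : J₁ R₁ R₂
    obtain ⟨cr, ci, β, hβ, hpos⟩ := pair_combined C3 (R₁ + R₂) (hR₁.add hR₂) (by
      intro x hx ⟨hc, hr⟩
      obtain ⟨hr1, hr2⟩ := psd_add_zero hR₁ hR₂ x hr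
      exact hnc x hx ⟨hC3zero x hc, hr1, hr2⟩)
    apply main_nondeg J₁ J₂ R₁ R₂ hJ₁ hJ₂ hR₁ hR₂ cr 0 β β
      (Or.inr (by linarith))
    intro x hx
    have hp := hpos x hx
    rw [hC3re x, hC3im x, qf_add, Complex.add_re] at hp
    linarith
  · -- case 4 : J₂ R₁ R₂
    obtain ⟨cr, ci, β, hβ, hpos⟩ := pair_combined J₂ (R₁ + R₂) (hR₁.add hR₂) (by
      intro x hx ⟨hc, hr⟩
      obtain ⟨hr1, hr2⟩ := psd_add_zero hR₁ hR₂ x hr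
      exact hnc x hx ⟨hc, hr1, hr2⟩)
    apply main_nondeg J₁ J₂ R₁ R₂ hJ₁ hJ₂ hR₁ hR₂ 0 ci β β
      (Or.inr (by linarith))
    intro x hx
    have hp := hpos x hx
    rw [skew_re hJ₂, qf_add, Complex.add_re] at hp
    linarith
end

section
/- Let P(λ) = λ(J₁+R₁) + (J₂+R₂) be an n×n complex posH pencil such that R₁ + R₂ is positive definite, and let β > 0 be a real number. If the Hermitian matrix R₁ + R₂ + β·(iJ₁) is positive definite, then no complex number z with Re z > 0, 0 ≤ Im z < β and Im z < β·Re z belongs to the numerical range of P(λ); if the Hermitian matrix R₁ + R₂ − β·(iJ₁) is positive definite, then no complex number z with Re z > 0, −β < Im z ≤ 0 and −Im z < β·Re z belongs to the numerical range of P(λ). -/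
open Matrix
open scoped ComplexOrder

/-!
For `x ≠ 0` write `r₁ = x*R₁x`, `r₂ = x*R₂x` (both `≥ 0`) and `x*J₁x = i t`; the skew-Hermitian
parts contribute nothing real, so `Re x*P(z)x = r₁ Re z - t Im z + r₂`. The hypotheses say
`r₁ + r₂ > 0` and `β t < r₁ + r₂`, so for `z` in the upper region either `t ≤ 0` or
`t Im z < min(1, Re z) β t < min(1, Re z) (r₁ + r₂) ≤ r₁ Re z + r₂`; either way `Re x*P(z)x > 0`.
The lower region is the mirror image: `x*P(z̄)x` for the pencil with `-J₁, -J₂` is the conjugate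
of `x*P(z)x`.
-/

namespace Matrix

variable {ι : Type*} [Fintype ι]

lemma star_star_dotProduct_mulVec {α : Type*} [CommRing α] [StarRing α]
    (M : Matrix ι ι α) (x : ι → α) :
    star (star x ⬝ᵥ M *ᵥ x) = star x ⬝ᵥ Mᴴ *ᵥ x := by
  rw [dotProduct_mulVec (star x) Mᴴ x, ← star_mulVec, ← star_dotProduct]

lemma re_star_dotProduct_mulVec_eq_zero_of_conjTranspose_eq_neg {J : Matrix ι ι ℂ}
    (hJ : Jᴴ = -J) (x : ι → ℂ) : (star x ⬝ᵥ J *ᵥ x).re = 0 := by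
  have h := congrArg Complex.re (star_star_dotProduct_mulVec J x)
  rw [hJ, neg_mulVec, dotProduct_neg, Complex.star_def, Complex.conj_re, Complex.neg_re] at h
  linarith

lemma re_star_dotProduct_add_smul_I_smul_mulVec (R J : Matrix ι ι ℂ) (γ : ℝ) (x : ι → ℂ) :
    (star x ⬝ᵥ (R + γ • (Complex.I • J)) *ᵥ x).re
      = (star x ⬝ᵥ R *ᵥ x).re - γ * (star x ⬝ᵥ J *ᵥ x).im := by
  simp [add_mulVec, smul_mulVec, dotProduct_add, dotProduct_smul, sub_eq_add_neg]

lemma re_star_dotProduct_pencil_mulVec {J₁ J₂ R₁ R₂ : Matrix ι ι ℂ}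
    (hJ₁ : J₁ᴴ = -J₁) (hJ₂ : J₂ᴴ = -J₂) (hR₁ : R₁.IsHermitian) (z : ℂ) (x : ι → ℂ) :
    (star x ⬝ᵥ ((z • (J₁ + R₁) + (J₂ + R₂)) *ᵥ x)).re
      = z.re * (star x ⬝ᵥ R₁ *ᵥ x).re - z.im * (star x ⬝ᵥ J₁ *ᵥ x).im
        + (star x ⬝ᵥ R₂ *ᵥ x).re := by
  have hR₁im : (star x ⬝ᵥ R₁ *ᵥ x).im = 0 := hR₁.im_star_dotProduct_mulVec_self x
  simp only [add_mulVec, smul_mulVec, dotProduct_add, dotProduct_smul, smul_eq_mul,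
    Complex.add_re, Complex.mul_re, Complex.add_im,
    re_star_dotProduct_mulVec_eq_zero_of_conjTranspose_eq_neg hJ₁,
    re_star_dotProduct_mulVec_eq_zero_of_conjTranspose_eq_neg hJ₂, hR₁im]
  ring

lemma star_dotProduct_pencil_mulVec_star {J₁ J₂ R₁ R₂ : Matrix ι ι ℂ}
    (hJ₁ : J₁ᴴ = -J₁) (hJ₂ : J₂ᴴ = -J₂) (hR₁ : R₁.IsHermitian) (hR₂ : R₂.IsHermitian)
    (z : ℂ) (x : ι → ℂ) :
    star x ⬝ᵥ ((star z • (-J₁ + R₁) + (-J₂ + R₂)) *ᵥ x)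
      = star (star x ⬝ᵥ ((z • (J₁ + R₁) + (J₂ + R₂)) *ᵥ x)) := by
  rw [star_star_dotProduct_mulVec, conjTranspose_add, conjTranspose_smul, conjTranspose_add,
    conjTranspose_add, hJ₁, hJ₂, hR₁.eq, hR₂.eq]

end Matrix

lemma mul_lt_of_pacman {β r₁ r₂ t a b : ℝ} (hr₁ : 0 ≤ r₁) (hr₂ : 0 ≤ r₂)
    (hr : 0 < r₁ + r₂) (ht : β * t < r₁ + r₂)
    (ha : 0 < a) (hb : 0 ≤ b) (hbβ : b < β) (hba : b < β * a) :
    b * t < a * r₁ + r₂ := by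
  rcases le_or_gt t 0 with ht₀ | ht₀
  · nlinarith [mul_nonneg hb (neg_nonneg.2 ht₀), mul_nonneg ha.le hr₁]
  rcases le_or_gt a 1 with ha₁ | ha₁
  · nlinarith [mul_lt_mul_of_pos_right hba ht₀, mul_nonneg (sub_nonneg.2 ha₁) hr₂]
  · nlinarith [mul_lt_mul_of_pos_right hbβ ht₀, mul_nonneg (sub_nonneg.2 ha₁.le) hr₁]

theorem star_dotProduct_posH_pencil_mulVec_ne_zero {ι : Type*} [Fintype ι]
    {J₁ J₂ R₁ R₂ : Matrix ι ι ℂ} (hJ₁ : J₁ᴴ = -J₁) (hJ₂ : J₂ᴴ = -J₂)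
    (hR₁ : R₁.PosSemidef) (hR₂ : R₂.PosSemidef) (hsum : (R₁ + R₂).PosDef) {β : ℝ}
    (hpos : (R₁ + R₂ + β • (Complex.I • J₁)).PosDef) {z : ℂ}
    (hre : 0 < z.re) (him : 0 ≤ z.im) (himβ : z.im < β) (himre : z.im < β * z.re)
    {x : ι → ℂ} (hx : x ≠ 0) :
    star x ⬝ᵥ ((z • (J₁ + R₁) + (J₂ + R₂)) *ᵥ x) ≠ 0 := by
  have hr₁ := (Complex.nonneg_iff.mp (hR₁.dotProduct_mulVec_nonneg x)).1
  have hr₂ := (Complex.nonneg_iff.mp (hR₂.dotProduct_mulVec_nonneg x)).1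
  have hr := (Complex.pos_iff.mp (hsum.dotProduct_mulVec_pos hx)).1
  have ht := (Complex.pos_iff.mp (hpos.dotProduct_mulVec_pos hx)).1
  rw [re_star_dotProduct_add_smul_I_smul_mulVec] at ht
  simp only [add_mulVec, dotProduct_add, Complex.add_re] at hr ht
  have hbound := mul_lt_of_pacman hr₁ hr₂ hr (by linarith) hre him himβ himre
  intro h
  have h_re := congrArg Complex.re h
  rw [re_star_dotProduct_pencil_mulVec hJ₁ hJ₂ hR₁.isHermitian] at h_re
  simp only [Complex.zero_re] at h_re
  linarith

theorem posH_pacman_exclusion_general {n : ℕ}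
    (J₁ J₂ R₁ R₂ : Matrix (Fin n) (Fin n) ℂ)
    (hJ₁ : J₁ᴴ = -J₁) (hJ₂ : J₂ᴴ = -J₂)
    (hR₁ : R₁.PosSemidef) (hR₂ : R₂.PosSemidef)
    (hsum : (R₁ + R₂).PosDef) (β : ℝ) :
    ((R₁ + R₂ + β • (Complex.I • J₁)).PosDef →
      ∀ z : ℂ, 0 < z.re → 0 ≤ z.im → z.im < β → z.im < β * z.re →
        ∀ x : Fin n → ℂ, x ≠ 0 →
          star x ⬝ᵥ ((z • (J₁ + R₁) + (J₂ + R₂)) *ᵥ x) ≠ 0) ∧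
    ((R₁ + R₂ - β • (Complex.I • J₁)).PosDef →
      ∀ z : ℂ, 0 < z.re → -β < z.im → z.im ≤ 0 → -z.im < β * z.re →
        ∀ x : Fin n → ℂ, x ≠ 0 →
          star x ⬝ᵥ ((z • (J₁ + R₁) + (J₂ + R₂)) *ᵥ x) ≠ 0) := by
  refine ⟨fun hpos z hre him himβ himre x hx =>
    star_dotProduct_posH_pencil_mulVec_ne_zero hJ₁ hJ₂ hR₁ hR₂ hsum hpos hre him himβ himre hx,
    fun hpos z hre himβ him himre x hx => ?_⟩
  have hneg₁ : (-J₁)ᴴ = -(-J₁) := by rw [conjTranspose_neg, hJ₁]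
  have hneg₂ : (-J₂)ᴴ = -(-J₂) := by rw [conjTranspose_neg, hJ₂]
  have hpos' : (R₁ + R₂ + β • (Complex.I • -J₁)).PosDef := by
    rwa [smul_neg, smul_neg, ← sub_eq_add_neg]
  have hconj := star_dotProduct_posH_pencil_mulVec_ne_zero hneg₁ hneg₂ hR₁ hR₂ hsum hpos'
    (z := star z) hre (by simpa using him) (by simpa [neg_lt] using himβ) (by simpa using himre) hx
  rwa [star_dotProduct_pencil_mulVec_star hJ₁ hJ₂ hR₁.isHermitian hR₂.isHermitian,
    star_ne_zero] at hconj

/-- Theorem 4.12 (pacman-shaped exclusion region): let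
`P(λ) = λ(J₁+R₁) + (J₂+R₂)` be a posH pencil with `R₁ + R₂` positive definite and
let `β > 0`. If `R₁ + R₂ + β(iJ₁) > 0`, then no `z` with `Re z > 0`,
`0 ≤ Im z < β` and `Im z < β·Re z` belongs to the numerical range of `P(λ)`; if
`R₁ + R₂ - β(iJ₁) > 0`, then no `z` with `Re z > 0`, `-β < Im z ≤ 0` and
`-Im z < β·Re z` belongs to the numerical range of `P(λ)`. -/
theorem posH_pacman_exclusion {n : ℕ}
    (J₁ J₂ R₁ R₂ : Matrix (Fin n) (Fin n) ℂ)
    (hJ₁ : J₁ᴴ = -J₁) (hJ₂ : J₂ᴴ = -J₂)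
    (hR₁ : R₁.PosSemidef) (hR₂ : R₂.PosSemidef)
    (hsum : (R₁ + R₂).PosDef) (β : ℝ) (hβ : 0 < β) :
    ((R₁ + R₂ + β • (Complex.I • J₁)).PosDef →
      ∀ z : ℂ, 0 < z.re → 0 ≤ z.im → z.im < β → z.im < β * z.re →
        ∀ x : Fin n → ℂ, x ≠ 0 →
          star x ⬝ᵥ ((z • (J₁ + R₁) + (J₂ + R₂)) *ᵥ x) ≠ 0) ∧
    ((R₁ + R₂ - β • (Complex.I • J₁)).PosDef →
      ∀ z : ℂ, 0 < z.re → -β < z.im → z.im ≤ 0 → -z.im < β * z.re →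
        ∀ x : Fin n → ℂ, x ≠ 0 →
          star x ⬝ᵥ ((z • (J₁ + R₁) + (J₂ + R₂)) *ᵥ x) ≠ 0) :=
  posH_pacman_exclusion_general J₁ J₂ R₁ R₂ hJ₁ hJ₂ hR₁ hR₂ hsum β
end

section
/- Let P(λ) = λᵈA_d + ⋯ + λA₁ + A₀ with d ≥ 1 be an n×n complex matrix polynomial whose coefficients A₀, …, A_d are Hermitian positive semidefinite, and assume P is regular, i.e., det P(λ₀) ≠ 0 for some λ₀ ∈ ℂ. Then the numerical range, and hence the spectrum, of P(λ) is contained in {z ∈ ℂ : |arg(z)| ≥ π/d} ∪ {0}: whenever μ ∈ ℂ and x ∈ ℂⁿ is nonzero with x*P(μ)x = 0, either μ = 0 or |arg(μ)| ≥ π/d. -/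
/-!
If `x*P(μ)x = ∑ μⁱ (x*Aᵢx) = 0` with `μ = r e^{iθ}`, `r > 0`, `|θ| < π/d`, multiply by `e^{-idθ/2}`:
the `i`-th term gets argument `(i - d/2)θ ∈ (-π/2, π/2)`, so its real part is a positive multiple
of the nonnegative number `x*Aᵢx`. The real parts sum to zero, hence every `x*Aᵢx` vanishes, so
`Aᵢx = 0` by semidefiniteness, and `x` lies in the kernel of every `P(ν)`, against regularity.
-/

open Matrix Complex Finset
open scoped ComplexOrder

theorem Real.cos_nat_mul_sub_half_mul_pos {d i : ℕ} {t : ℝ} (hi : i ≤ d)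
    (ht : |t| < Real.pi / d) : 0 < Real.cos (i * t - d * t / 2) := by
  have hd : (0 : ℝ) < d := (div_pos_iff_of_pos_left Real.pi_pos).mp ((abs_nonneg t).trans_lt ht)
  have hi' : (i : ℝ) ≤ d := by exact_mod_cast hi
  have hdist : |(i : ℝ) - d / 2| ≤ d / 2 :=
    abs_le.mpr ⟨by linarith [i.cast_nonneg (α := ℝ)], by linarith⟩
  apply Real.cos_pos_of_mem_Ioo
  rw [Set.mem_Ioo, ← abs_lt, show (i : ℝ) * t - d * t / 2 = (i - d / 2) * t by ring, abs_mul]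
  calc |(i : ℝ) - d / 2| * |t| ≤ d / 2 * |t| := by gcongr
    _ < d / 2 * (Real.pi / d) := by gcongr
    _ = Real.pi / 2 := by field_simp

theorem Complex.re_exp_neg_mul_I_mul_pow (φ : ℝ) (z : ℂ) (i : ℕ) :
    (exp (-φ * I) * z ^ i).re = ‖z‖ ^ i * Real.cos (i * z.arg - φ) := by
  conv_lhs => rw [← norm_mul_exp_arg_mul_I z]
  rw [mul_pow, ← exp_nat_mul, mul_left_comm, ← exp_add, ← ofReal_pow,
    show -(φ : ℂ) * I + i * (z.arg * I) = ((i * z.arg - φ : ℝ) : ℂ) * I by push_cast; ring,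
    re_ofReal_mul, exp_ofReal_mul_I_re]

theorem Complex.eq_ofReal_re_of_nonneg {c : ℂ} (hc : 0 ≤ c) : c = (c.re : ℂ) :=
  Complex.ext rfl (nonneg_iff.mp hc).2.symm

theorem Complex.eq_zero_of_sum_pow_mul_eq_zero_of_abs_arg_lt {d : ℕ} {z : ℂ} (hz : z ≠ 0)
    (harg : |z.arg| < Real.pi / d) {c : ℕ → ℂ} (hc : ∀ i ∈ range (d + 1), 0 ≤ c i)
    (hsum : ∑ i ∈ range (d + 1), z ^ i * c i = 0) : ∀ i ∈ range (d + 1), c i = 0 := by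
  set φ : ℝ := d * z.arg / 2
  have hpos : ∀ i ∈ range (d + 1), 0 < ‖z‖ ^ i * Real.cos (i * z.arg - φ) := fun i hi =>
    mul_pos (pow_pos (norm_pos_iff.mpr hz) i)
      (Real.cos_nat_mul_sub_half_mul_pos (Nat.lt_succ_iff.mp (mem_range.mp hi)) harg)
  have hre : ∑ i ∈ range (d + 1), (c i).re * (‖z‖ ^ i * Real.cos (i * z.arg - φ)) = 0 :=
    calc _ = (exp (-φ * I) * ∑ i ∈ range (d + 1), z ^ i * c i).re := by
          rw [mul_sum, re_sum]
          refine sum_congr rfl fun i hi => ?_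
          rw [eq_ofReal_re_of_nonneg (hc i hi), ← mul_assoc (exp _), re_mul_ofReal,
            re_exp_neg_mul_I_mul_pow, ofReal_re, mul_comm]
      _ = 0 := by rw [hsum, mul_zero, zero_re]
  intro i hi
  have hterm := (sum_eq_zero_iff_of_nonneg fun j hj =>
    mul_nonneg (nonneg_iff.mp (hc j hj)).1 (hpos j hj).le).mp hre i hi
  rw [eq_ofReal_re_of_nonneg (hc i hi), (mul_eq_zero.mp hterm).resolve_right (hpos i hi).ne',
    ofReal_zero]

theorem Matrix.dotProduct_sum_smul_mulVec {R ι m : Type*} [CommSemiring R] [Fintype m]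
    (s : Finset ι) (a : ι → R) (M : ι → Matrix m m R) (u v : m → R) :
    u ⬝ᵥ ((∑ i ∈ s, a i • M i) *ᵥ v) = ∑ i ∈ s, a i * (u ⬝ᵥ (M i *ᵥ v)) := by
  simp only [sum_mulVec, dotProduct_sum, smul_mulVec, dotProduct_smul, smul_eq_mul]

theorem Matrix.det_sum_smul_eq_zero_of_mulVec_eq_zero {R ι m : Type*} [CommRing R] [IsDomain R]
    [Fintype m] [DecidableEq m] {s : Finset ι} (a : ι → R) {M : ι → Matrix m m R} {v : m → R}
    (hv : v ≠ 0) (hMv : ∀ i ∈ s, M i *ᵥ v = 0) : (∑ i ∈ s, a i • M i).det = 0 :=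
  exists_mulVec_eq_zero_iff.mp ⟨v, hv, by
    rw [sum_mulVec]
    exact sum_eq_zero fun i hi => by rw [smul_mulVec, hMv i hi, smul_zero]⟩

theorem psd_poly_numrange_arg_bound_general {n d : ℕ}
    (A : ℕ → Matrix (Fin n) (Fin n) ℂ)
    (hA : ∀ i, i ≤ d → (A i).PosSemidef)
    (hreg : ∃ μ : ℂ, (∑ i ∈ Finset.range (d + 1), μ ^ i • A i).det ≠ 0)
    (μ : ℂ) (x : Fin n → ℂ) (hx : x ≠ 0)
    (h : star x ⬝ᵥ ((∑ i ∈ Finset.range (d + 1), μ ^ i • A i) *ᵥ x) = 0) :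
    μ = 0 ∨ Real.pi / d ≤ |μ.arg| := by
  refine or_iff_not_imp_left.mpr fun hμ => not_lt.mp fun harg => ?_
  have hA' : ∀ i ∈ range (d + 1), (A i).PosSemidef := fun i hi =>
    hA i (Nat.lt_succ_iff.mp (mem_range.mp hi))
  rw [dotProduct_sum_smul_mulVec] at h
  have hquad := eq_zero_of_sum_pow_mul_eq_zero_of_abs_arg_lt hμ harg
    (fun i hi => (hA' i hi).dotProduct_mulVec_nonneg x) h
  have hAx : ∀ i ∈ range (d + 1), A i *ᵥ x = 0 := fun i hi =>
    ((hA' i hi).dotProduct_mulVec_zero_iff x).mp (hquad i hi)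
  obtain ⟨ν, hν⟩ := hreg
  exact hν (det_sum_smul_eq_zero_of_mulVec_eq_zero _ hx hAx)

/-- Theorem 5.7: let `P(λ) = λᵈ A_d + ⋯ + λ A₁ + A₀`, `d ≥ 1`, be a regular
matrix polynomial with Hermitian positive semidefinite coefficients. Then the
numerical range (and hence the spectrum) of `P(λ)` is contained in
`{z : |arg z| ≥ π/d} ∪ {0}`. -/
theorem psd_poly_numrange_arg_bound {n d : ℕ} (hd : 1 ≤ d)
    (A : ℕ → Matrix (Fin n) (Fin n) ℂ)
    (hA : ∀ i, i ≤ d → (A i).PosSemidef)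
    (hreg : ∃ μ : ℂ, (∑ i ∈ Finset.range (d + 1), μ ^ i • A i).det ≠ 0)
    (μ : ℂ) (x : Fin n → ℂ) (hx : x ≠ 0)
    (h : star x ⬝ᵥ ((∑ i ∈ Finset.range (d + 1), μ ^ i • A i) *ᵥ x) = 0) :
    μ = 0 ∨ Real.pi / d ≤ |μ.arg| :=
  psd_poly_numrange_arg_bound_general A hA hreg μ x hx h
end

section
/- Let L(λ) = λ³A₃ + λ²A₂ + λA₁ + A₀ be an n×n complex matrix polynomial where A₃, A₂, A₀ are Hermitian positive definite and A₁ is Hermitian positive semidefinite. If in addition A₂ ≥ A₃ and A₁ ≥ A₀ in the Loewner order (i.e., A₂ − A₃ and A₁ − A₀ are positive semidefinite), then all eigenvalues of L(λ) lie in the closed left half-plane: every λ₀ ∈ ℂ with det(λ₀³A₃ + λ₀²A₂ + λ₀A₁ + A₀) = 0 satisfies Re λ₀ ≤ 0. -/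
/-!
If `L(λ)` is singular, pick `v ≠ 0` with `L(λ) v = 0`; then `λ` is a root of the scalar cubic
`a λ³ + b λ² + c λ + d` with `a = v*A₃v, …, d = v*A₀v`. Positivity gives `a > 0` and `b, c, d ≥ 0`,
and the Loewner hypotheses `a ≤ b`, `d ≤ c` give `ad ≤ bc`: the closed Routh–Hurwitz condition,
which keeps the roots of the cubic in the closed left half-plane.
-/

open Matrix
open scoped ComplexOrder

theorem Complex.re_nonpos_of_cubic_eq_zero {a b c d z : ℂ} (ha : 0 < a) (hb : 0 ≤ b)
    (hc : 0 ≤ c) (hd : 0 ≤ d) (hRH : a * d ≤ b * c)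
    (hz : a * z ^ 3 + b * z ^ 2 + c * z + d = 0) : z.re ≤ 0 := by
  lift a to ℝ using (Complex.pos_iff.1 ha).2.symm
  lift b to ℝ using (Complex.nonneg_iff.1 hb).2.symm
  lift c to ℝ using (Complex.nonneg_iff.1 hc).2.symm
  lift d to ℝ using (Complex.nonneg_iff.1 hd).2.symm
  norm_cast at ha hb hc hd hRH
  obtain ⟨x, y⟩ := z
  simp only [Complex.ext_iff, pow_succ, pow_zero, one_mul, Complex.add_re, Complex.add_im,
    Complex.mul_re, Complex.mul_im, Complex.ofReal_re, Complex.ofReal_im, Complex.zero_re,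
    Complex.zero_im] at hz
  obtain ⟨hre, him⟩ := hz
  by_contra! hx
  have him' : y * (a * (3 * x ^ 2 - y ^ 2) + 2 * b * x + c) = 0 := by linear_combination him
  rcases mul_eq_zero.1 him' with rfl | hy
  · nlinarith [mul_pos ha (pow_pos hx 3), mul_nonneg hb (mul_pos hx hx).le,
      mul_nonneg hc hx.le]
  · -- eliminate `a y² = 3a x² + 2b x + c` from the real part
    have hpos : 8 * a ^ 2 * x ^ 3 + 8 * a * b * x ^ 2 + 2 * a * c * x + 2 * b ^ 2 * x +
        (b * c - a * d) = 0 := by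
      linear_combination (-a) * hre + (3 * a * x + b) * hy
    nlinarith [mul_pos (mul_pos ha ha) (pow_pos hx 3),
      mul_nonneg (mul_nonneg ha.le hb) (mul_pos hx hx).le,
      mul_nonneg (mul_nonneg ha.le hc) hx.le, mul_nonneg (mul_nonneg hb hb) hx.le]

theorem Matrix.PosSemidef.dotProduct_mulVec_le_of_sub {n R : Type*} [Fintype n] [Ring R]
    [PartialOrder R] [StarRing R] [IsOrderedAddMonoid R] {A B : Matrix n n R}
    (h : (B - A).PosSemidef) (v : n → R) : star v ⬝ᵥ A *ᵥ v ≤ star v ⬝ᵥ B *ᵥ v := by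
  simpa only [sub_mulVec, dotProduct_sub, sub_nonneg] using h.dotProduct_mulVec_nonneg v

theorem Matrix.exists_ne_zero_cubic_dotProduct_mulVec_eq_zero {n K : Type*} [Fintype n]
    [DecidableEq n] [CommRing K] [IsDomain K] [Star K] (A₀ A₁ A₂ A₃ : Matrix n n K) (z : K)
    (h : (z ^ 3 • A₃ + z ^ 2 • A₂ + z • A₁ + A₀).det = 0) :
    ∃ v ≠ 0, (star v ⬝ᵥ A₃ *ᵥ v) * z ^ 3 + (star v ⬝ᵥ A₂ *ᵥ v) * z ^ 2 +
      (star v ⬝ᵥ A₁ *ᵥ v) * z + star v ⬝ᵥ A₀ *ᵥ v = 0 := by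
  obtain ⟨v, hv, hker⟩ := exists_mulVec_eq_zero_iff.2 h
  refine ⟨v, hv, ?_⟩
  have hform := congrArg (star v ⬝ᵥ ·) hker
  simp only [add_mulVec, smul_mulVec, dotProduct_add, dotProduct_smul, smul_eq_mul,
    dotProduct_zero] at hform
  linear_combination hform

theorem cubic_psd_poly_eigenvalues_left_half_plane_general {n : ℕ}
    (A₀ A₁ A₂ A₃ : Matrix (Fin n) (Fin n) ℂ)
    (h₃ : A₃.PosDef) (h₀ : A₀.PosDef)
    (h23 : (A₂ - A₃).PosSemidef) (h10 : (A₁ - A₀).PosSemidef)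
    (lam : ℂ)
    (h : (lam ^ 3 • A₃ + lam ^ 2 • A₂ + lam • A₁ + A₀).det = 0) :
    lam.re ≤ 0 := by
  obtain ⟨v, hv, hroot⟩ := exists_ne_zero_cubic_dotProduct_mulVec_eq_zero A₀ A₁ A₂ A₃ lam h
  have ha := h₃.dotProduct_mulVec_pos hv
  have hd := (h₀.dotProduct_mulVec_pos hv).le
  have hab := h23.dotProduct_mulVec_le_of_sub v
  have hdc := h10.dotProduct_mulVec_le_of_sub v
  have hb := ha.le.trans hab
  exact Complex.re_nonpos_of_cubic_eq_zero ha hb (hd.trans hdc) hd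
    (mul_le_mul hab hdc hd hb) hroot

/-- Theorem 5.9 (second part): let `L(λ) = λ³A₃ + λ²A₂ + λA₁ + A₀` with
`A₃, A₂, A₀` Hermitian positive definite, `A₁` Hermitian positive semidefinite,
`A₂ ≥ A₃` and `A₁ ≥ A₀` in the Loewner order. Then all eigenvalues of `L(λ)` lie
in the closed left half-plane. -/
theorem cubic_psd_poly_eigenvalues_left_half_plane {n : ℕ}
    (A₀ A₁ A₂ A₃ : Matrix (Fin n) (Fin n) ℂ)
    (h₃ : A₃.PosDef) (h₂ : A₂.PosDef) (h₀ : A₀.PosDef) (h₁ : A₁.PosSemidef)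
    (h23 : (A₂ - A₃).PosSemidef) (h10 : (A₁ - A₀).PosSemidef)
    (lam : ℂ)
    (h : (lam ^ 3 • A₃ + lam ^ 2 • A₂ + lam • A₁ + A₀).det = 0) :
    lam.re ≤ 0 :=
  cubic_psd_poly_eigenvalues_left_half_plane_general A₀ A₁ A₂ A₃ h₃ h₀ h23 h10 lam h
end
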